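/- arXiv:2201.12076 — 6 statements merged into one kernel-verified Lean document; each statement's English description precedes it below -/
import Mathlib

section
/- Let T be a power-bounded operator on a complex Banach space X satisfying the (dGSF) condition, let f ∈ 𝓑(𝔻) with continuous extension f̃ to the closed unit disc, and let f(T) ∈ L(X) be the operator-norm limit of f(rT) as r → 1−. If lim_{n→∞} ‖Tⁿ f(T)‖ = 0, then f̃(λ) = 0 for every λ ∈ σ(T) ∩ 𝕋. -/
open MeasureTheory Filter Metric
open scoped ENNReal Topology

/-- The Besov seminorm `‖f‖_{𝓑₀} = ∫₀¹ sup_{|θ|≤π} |f'(r e^{iθ})| dr`. -/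
noncomputable def besovNorm0 (f : ℂ → ℂ) : ℝ≥0∞ :=
  ∫⁻ r in Set.Ioo (0:ℝ) 1,
    ⨆ θ ∈ Set.Icc (-Real.pi) Real.pi,
      (‖deriv f ((r : ℂ) * Complex.exp ((θ : ℂ) * Complex.I))‖₊ : ℝ≥0∞)

/-- `T` is power-bounded. -/
def PowerBounded {X : Type*} [NormedAddCommGroup X] [NormedSpace ℂ X]
    (T : X →L[ℂ] X) : Prop :=
  ∃ M : ℝ, ∀ n : ℕ, ‖T ^ n‖ ≤ M

/-- The discrete Gomilko–Shi–Feng condition. -/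
def dGSF {X : Type*} [NormedAddCommGroup X] [NormedSpace ℂ X]
    (T : X →L[ℂ] X) : Prop :=
  ∀ (x : X) (x' : X →L[ℂ] ℂ), ∃ M : ℝ, ∀ r : ℝ, 0 < r → r < 1 →
    (1 - r) * ∫ θ in (-Real.pi)..Real.pi,
      ‖x' ((T * (Ring.inverse ((1 : X →L[ℂ] X)
          - (((r : ℂ) * Complex.exp ((θ : ℂ) * Complex.I)) • T))) ^ 2) x)‖ ≤ M


/-!
If `z ∈ σ(T)` with `|z| = 1`, then for `0 < r < 1` the spectral mapping theorem (for the
polynomial partial sums, then a limit) puts `zⁿ f(rz)` in `σ(Tⁿ f(rT))`. Letting `r → 1⁻` gives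
`zⁿ f̃(z) ∈ σ(Tⁿ f(T))`, hence `|f̃(z)| ≤ ‖Tⁿ f(T)‖ → 0`.
-/

section BanachAlgebra

variable {A : Type*} [NormedRing A] [NormedAlgebra ℂ A]

/-- `{(c, b) | c ∈ σ(b)}` is closed in `ℂ × A` since the units of `A` form an open set. -/
theorem spectrum.mem_of_tendsto [CompleteSpace A] {ι : Type*} {l : Filter ι} [l.NeBot]
    {c : ι → ℂ} {b : ι → A} {c₀ : ℂ} {b₀ : A} (hc : Tendsto c l (𝓝 c₀)) (hb : Tendsto b l (𝓝 b₀))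
    (h : ∀ᶠ i in l, c i ∈ spectrum ℂ (b i)) : c₀ ∈ spectrum ℂ b₀ := by
  by_contra h₀
  rw [spectrum.notMem_iff] at h₀
  have hlim : Tendsto (fun i => algebraMap ℂ A (c i) - b i) l (𝓝 (algebraMap ℂ A c₀ - b₀)) :=
    (((continuous_algebraMap ℂ A).tendsto c₀).comp hc).sub hb
  obtain ⟨i, hi, hunit⟩ := (h.and (hlim.eventually (Units.isOpen.eventually_mem h₀))).exists
  exact spectrum.notMem_iff.mpr hunit hi

theorem spectrum.pow_mul_sum_mem {x : A} {z : ℂ} (hz : z ∈ spectrum ℂ x) (c : ℕ → ℂ)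
    (n N : ℕ) :
    z ^ n * ∑ m ∈ Finset.range N, c m * z ^ m ∈
      spectrum ℂ (x ^ n * ∑ m ∈ Finset.range N, c m • x ^ m) := by
  have h := spectrum.subset_polynomial_aeval x
    (Polynomial.X ^ n * ∑ m ∈ Finset.range N, Polynomial.C (c m) * Polynomial.X ^ m) ⟨z, hz, rfl⟩
  simpa [Polynomial.eval_finsetSum, Algebra.smul_def] using h

theorem spectrum.pow_mul_tsum_mem [CompleteSpace A] {x : A} {z : ℂ} (hz : z ∈ spectrum ℂ x)
    {c : ℕ → ℂ} {s : ℂ}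
    (hs : HasSum (fun m => c m * z ^ m) s) (hx : Summable fun m => c m • x ^ m) (n : ℕ) :
    z ^ n * s ∈ spectrum ℂ (x ^ n * ∑' m, c m • x ^ m) :=
  spectrum.mem_of_tendsto (hs.tendsto_sum_nat.const_mul _)
    (hx.hasSum.tendsto_sum_nat.const_mul _)
    (Eventually.of_forall (spectrum.pow_mul_sum_mem hz c n))

end BanachAlgebra

theorem PowerBounded.summable_smul_pow {X : Type*} [NormedAddCommGroup X] [NormedSpace ℂ X]
    [CompleteSpace X] {T : X →L[ℂ] X} (hT : PowerBounded T) {c : ℕ → ℂ}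
    (hc : Summable fun m => ‖c m‖) : Summable fun m => c m • T ^ m := by
  obtain ⟨M, hM⟩ := hT
  refine Summable.of_norm_bounded (hc.mul_right M) fun m => ?_
  exact (norm_smul_le _ _).trans (mul_le_mul_of_nonneg_left (hM m) (norm_nonneg _))

theorem Complex.ofReal_mul_mem_ball_of_norm_eq_one {z : ℂ} (hz : ‖z‖ = 1) {r : ℝ}
    (hr : r ∈ Set.Ioo (0 : ℝ) 1) : (r : ℂ) * z ∈ ball (0 : ℂ) 1 := by
  simpa [norm_mul, hz, abs_of_pos hr.1] using hr.2

theorem ContinuousOn.tendsto_radial_of_norm_eq_one {g : ℂ → ℂ}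
    (hg : ContinuousOn g (closedBall 0 1)) {z : ℂ} (hz : ‖z‖ = 1) :
    Tendsto (fun r : ℝ => g (r * z)) (𝓝[<] 1) (𝓝 (g z)) := by
  have hpath : Tendsto (fun r : ℝ => (r : ℂ) * z) (𝓝[<] 1) (𝓝[closedBall 0 1] z) := by
    refine tendsto_nhdsWithin_of_tendsto_nhds_of_eventually_within _ ?_ ?_
    · have h : Tendsto (fun r : ℝ => (r : ℂ) * z) (𝓝 1) (𝓝 z) := by
        simpa using (by fun_prop : Continuous fun r : ℝ => (r : ℂ) * z).tendsto 1
      exact h.mono_left nhdsWithin_le_nhds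
    · filter_upwards [Ioo_mem_nhdsLT (zero_lt_one' ℝ)] with r hr
      exact ball_subset_closedBall (Complex.ofReal_mul_mem_ball_of_norm_eq_one hz hr)
  exact (hg z (by simp [hz])).tendsto.comp hpath

theorem kt_besov_necessity_general
    {X : Type*} [NormedAddCommGroup X] [NormedSpace ℂ X] [CompleteSpace X]
    (T : X →L[ℂ] X) (hpb : PowerBounded T)
    (f : ℂ → ℂ)
    (ftilde : ℂ → ℂ) (hft : ContinuousOn ftilde (closedBall (0:ℂ) 1))
    (hext : ∀ z ∈ ball (0:ℂ) 1, ftilde z = f z)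
    (a : ℕ → ℂ) (ha : ∀ z ∈ ball (0:ℂ) 1, HasSum (fun n => a n * z ^ n) (f z))
    (fT : X →L[ℂ] X)
    (hfT : Tendsto (fun r : ℝ => ∑' n : ℕ, (a n * (r : ℂ) ^ n) • T ^ n)
      (nhdsWithin 1 (Set.Iio 1)) (nhds fT))
    (hlim : Tendsto (fun n : ℕ => ‖T ^ n * fT‖) atTop (nhds 0)) :
    ∀ z ∈ spectrum ℂ T, ‖z‖ = 1 → ftilde z = 0 := by
  intro z hz hz1
  have hball : ∀ᶠ r : ℝ in 𝓝[<] 1, (r : ℂ) * z ∈ ball (0 : ℂ) 1 := by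
    filter_upwards [Ioo_mem_nhdsLT (zero_lt_one' ℝ)] with r hr
    exact Complex.ofReal_mul_mem_ball_of_norm_eq_one hz1 hr
  have hradial : ∀ n : ℕ, ∀ᶠ r : ℝ in 𝓝[<] 1,
      z ^ n * f (r * z) ∈ spectrum ℂ (T ^ n * ∑' m, (a m * (r : ℂ) ^ m) • T ^ m) := by
    intro n
    filter_upwards [hball] with r hr
    have hs : HasSum (fun m => a m * (r : ℂ) ^ m * z ^ m) (f (r * z)) := by
      simpa only [mul_pow, mul_assoc] using ha _ hr
    have habs : Summable fun m => ‖a m * (r : ℂ) ^ m‖ := by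
      simpa [norm_mul, hz1] using (summable_norm_iff.mpr (ha _ hr).summable)
    exact spectrum.pow_mul_tsum_mem hz hs (hpb.summable_smul_pow habs) n
  have hf_radial : Tendsto (fun r : ℝ => f (r * z)) (𝓝[<] 1) (𝓝 (ftilde z)) :=
    (hft.tendsto_radial_of_norm_eq_one hz1).congr' (hball.mono fun r hr => hext _ hr)
  have hbound : ∀ n : ℕ, ‖ftilde z‖ ≤ ‖T ^ n * fT‖ := fun n => by
    have hmem := spectrum.mem_of_tendsto (hf_radial.const_mul (z ^ n)) (hfT.const_mul (T ^ n))
      (hradial n)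
    calc ‖ftilde z‖ = ‖z ^ n * ftilde z‖ := by simp [hz1]
      _ ≤ ‖T ^ n * fT‖ * ‖(1 : X →L[ℂ] X)‖ := spectrum.norm_le_norm_mul_of_mem hmem
      _ ≤ ‖T ^ n * fT‖ := mul_le_of_le_one_right (norm_nonneg _) ContinuousLinearMap.norm_id_le
  exact norm_le_zero_iff.mp (ge_of_tendsto' hlim hbound)

theorem kt_besov_necessity
    {X : Type*} [NormedAddCommGroup X] [NormedSpace ℂ X] [CompleteSpace X]
    (T : X →L[ℂ] X) (hpb : PowerBounded T) (hdgsf : dGSF T)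
    (f : ℂ → ℂ) (hf : ∀ z ∈ ball (0:ℂ) 1, DifferentiableAt ℂ f z)
    (hB : besovNorm0 f < ⊤)
    (ftilde : ℂ → ℂ) (hft : ContinuousOn ftilde (closedBall (0:ℂ) 1))
    (hext : ∀ z ∈ ball (0:ℂ) 1, ftilde z = f z)
    (a : ℕ → ℂ) (ha : ∀ z ∈ ball (0:ℂ) 1, HasSum (fun n => a n * z ^ n) (f z))
    (fT : X →L[ℂ] X)
    (hfT : Tendsto (fun r : ℝ => ∑' n : ℕ, (a n * (r : ℂ) ^ n) • T ^ n)
      (nhdsWithin 1 (Set.Iio 1)) (nhds fT))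
    (hlim : Tendsto (fun n : ℕ => ‖T ^ n * fT‖) atTop (nhds 0)) :
    ∀ z ∈ spectrum ℂ T, ‖z‖ = 1 → ftilde z = 0 :=
  kt_besov_necessity_general T hpb f ftilde hft hext a ha fT hfT hlim
end

section
/- Let f be holomorphic on 𝔻 with ∫₀¹ sup_{|θ|≤π} |f'(r e^{iθ})| dr < ∞. Then f is uniformly continuous on 𝔻, and hence extends to a continuous function on the closed unit disc. -/
/-!
Integrating `f'` along a radius bounds `‖f z - f (ρ z)‖` by the integral of
`r ↦ sup_θ ‖f' (r e^{iθ})‖` over an interval of length at most `1 - ρ`. By absolute continuity of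
the integral, the dilations `z ↦ f (ρ z)`, each uniformly continuous on the closed disc, therefore
converge to `f` uniformly on `𝔻` as `ρ → 1⁻`, so `f` is uniformly continuous on `𝔻`. A uniformly
continuous function into a complete space extends continuously to the closure of its domain.
-/

open MeasureTheory Metric
open scoped ENNReal

open Filter Topology

noncomputable def circleSupNormDeriv (f : ℂ → ℂ) (r : ℝ) : ℝ≥0∞ :=
  ⨆ θ ∈ Set.Icc (-Real.pi) Real.pi, ‖deriv f (r * Complex.exp (θ * Complex.I))‖ₑ

theorem besovNorm0_eq_lintegral (f : ℂ → ℂ) :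
    besovNorm0 f = ∫⁻ r in Set.Ioo 0 1, circleSupNormDeriv f r := rfl

theorem enorm_deriv_le_circleSupNormDeriv (f : ℂ → ℂ) (r : ℝ) {u : ℂ} (hu : ‖u‖ = 1) :
    ‖deriv f (r * u)‖ₑ ≤ circleSupNormDeriv f r := by
  have hexp : Complex.exp (u.arg * Complex.I) = u := by
    simpa [hu] using Complex.norm_mul_exp_arg_mul_I u
  rw [← hexp]
  exact le_iSup₂_of_le (f := fun θ (_ : θ ∈ Set.Icc (-Real.pi) Real.pi) =>
    ‖deriv f (r * Complex.exp (θ * Complex.I))‖ₑ) u.arg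
    ⟨(Complex.neg_pi_lt_arg u).le, Complex.arg_le_pi u⟩ le_rfl

theorem enorm_sub_le_lintegral_circleSupNormDeriv {f : ℂ → ℂ}
    (hf : DifferentiableOn ℂ f (ball 0 1)) {u : ℂ} (hu : ‖u‖ = 1) {a b : ℝ} (ha : 0 ≤ a)
    (hab : a ≤ b) (hb : b < 1) :
    ‖f (b * u) - f (a * u)‖ₑ ≤ ∫⁻ r in Set.Icc a b, circleSupNormDeriv f r := by
  have hmaps : Set.MapsTo (fun t : ℝ => (t : ℂ) * u) (Set.Icc a b) (ball 0 1) := fun t ht => by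
    simp [hu, abs_of_nonneg (ha.trans ht.1), ht.2.trans_lt hb]
  have hsmooth : ContDiffOn ℝ 1 (fun t : ℝ => f (t * u)) (Set.Icc a b) :=
    ((hf.contDiffOn isOpen_ball).restrict_scalars ℝ).comp
      (Complex.ofRealCLM.contDiff.mul contDiff_const).contDiffOn hmaps
  refine (enorm_sub_le_lintegral_deriv_of_contDiffOn_Icc hsmooth hab).trans
    (setLIntegral_mono' measurableSet_Icc fun t ht => ?_)
  have hderiv : HasDerivAt (fun t : ℝ => f (t * u)) (deriv f (t * u) * u) t := by
    have := ((hf.differentiableAt (isOpen_ball.mem_nhds (hmaps ht))).hasDerivAt.comp (t : ℂ)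
      ((hasDerivAt_id (t : ℂ)).mul_const u))
    simpa using this.comp_ofReal
  rw [hderiv.deriv, enorm_mul, ← ofReal_norm u, hu, ENNReal.ofReal_one, mul_one]
  exact enorm_deriv_le_circleSupNormDeriv f t hu

theorem enorm_sub_comp_mul_le_lintegral_circleSupNormDeriv {f : ℂ → ℂ}
    (hf : DifferentiableOn ℂ f (ball 0 1)) {z : ℂ} (hz : z ∈ ball 0 1) (hz0 : z ≠ 0) {ρ : ℝ}
    (hρ0 : 0 ≤ ρ) (hρ1 : ρ ≤ 1) :
    ‖f z - f (ρ * z)‖ₑ ≤ ∫⁻ r in Set.Icc (ρ * ‖z‖) ‖z‖, circleSupNormDeriv f r := by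
  have hnorm : (‖z‖ : ℂ) ≠ 0 := by simpa using hz0
  have hu : ‖(‖z‖ : ℂ)⁻¹ * z‖ = 1 := by simp [hz0]
  convert enorm_sub_le_lintegral_circleSupNormDeriv hf hu (by positivity)
    (mul_le_of_le_one_left (norm_nonneg z) hρ1) (mem_ball_zero_iff.1 hz) using 3
  · field_simp
  · push_cast
    field_simp

theorem tendstoUniformlyOn_comp_mul_of_besovNorm0_ne_top {f : ℂ → ℂ}
    (hf : DifferentiableOn ℂ f (ball 0 1)) (hB : besovNorm0 f ≠ ⊤) :
    TendstoUniformlyOn (fun (ρ : ℝ) z => f (ρ * z)) f (𝓝[<] 1) (ball 0 1) := by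
  rw [besovNorm0_eq_lintegral] at hB
  rw [Metric.tendstoUniformlyOn_iff]
  intro ε hε
  obtain ⟨δ, hδ, hsmall⟩ := exists_pos_setLIntegral_lt_of_measure_lt
    (μ := volume.restrict (Set.Ioo 0 1)) hB (ENNReal.ofReal_pos.2 hε).ne'
  obtain ⟨η, -, hη0, hηδ⟩ := ENNReal.lt_iff_exists_real_btwn.1 hδ
  have hη : 1 - η < 1 := by linarith [ENNReal.ofReal_pos.1 hη0]
  filter_upwards [Ioo_mem_nhdsLT (max_lt zero_lt_one hη)] with ρ hρ z hz
  rcases eq_or_ne z 0 with rfl | hz0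
  · simpa using hε
  have hρ0 : 0 < ρ := (le_max_left _ _).trans_lt hρ.1
  have hρη : 1 - η < ρ := (le_max_right _ _).trans_lt hρ.1
  have hzn : ‖z‖ < 1 := mem_ball_zero_iff.1 hz
  have hsub : Set.Icc (ρ * ‖z‖) ‖z‖ ⊆ Set.Ioo 0 1 := fun r hr =>
    ⟨lt_of_lt_of_le (by positivity) hr.1, hr.2.trans_lt hzn⟩
  rw [← edist_lt_ofReal, edist_eq_enorm_sub]
  calc ‖f z - f (ρ * z)‖ₑ
      ≤ ∫⁻ r in Set.Icc (ρ * ‖z‖) ‖z‖, circleSupNormDeriv f r :=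
        enorm_sub_comp_mul_le_lintegral_circleSupNormDeriv hf hz hz0 hρ0.le hρ.2.le
    _ = ∫⁻ r in Set.Icc (ρ * ‖z‖) ‖z‖, circleSupNormDeriv f r ∂volume.restrict (Set.Ioo 0 1) := by
        rw [Measure.restrict_restrict' measurableSet_Ioo, Set.inter_eq_left.2 hsub]
    _ < ENNReal.ofReal ε := hsmall _ <| calc
        volume.restrict (Set.Ioo 0 1) (Set.Icc (ρ * ‖z‖) ‖z‖)
          ≤ volume (Set.Icc (ρ * ‖z‖) ‖z‖) := Measure.restrict_le_self _
        _ = ENNReal.ofReal (‖z‖ - ρ * ‖z‖) := Real.volume_Icc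
        _ ≤ ENNReal.ofReal η := ENNReal.ofReal_le_ofReal (by nlinarith [norm_nonneg z])
        _ < δ := hηδ

theorem UniformContinuousOn.continuousOn_extendFrom_closure {α β : Type*} [UniformSpace α]
    [UniformSpace β] [CompleteSpace β] {f : α → β} {s : Set α} (hf : UniformContinuousOn f s) :
    ContinuousOn (extendFrom s f) (closure s) := by
  refine continuousOn_extendFrom subset_rfl fun x hx => CompleteSpace.complete ?_
  have := mem_closure_iff_nhdsWithin_neBot.mp hx
  refine ⟨inferInstance, ?_⟩
  rw [prod_map_map_eq]
  refine hf.mono_left (le_inf ?_ ?_)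
  · exact (Filter.prod_mono nhdsWithin_le_nhds nhdsWithin_le_nhds).trans (cauchy_nhds (a := x)).2
  · rw [← prod_principal_principal]
    exact Filter.prod_mono inf_le_right inf_le_right

/-- A function in `𝓑(𝔻)` is uniformly continuous on `𝔻`, hence extends continuously
to the closed unit disc. -/
theorem besov_uniformly_continuous (f : ℂ → ℂ)
    (hf : ∀ z ∈ ball (0:ℂ) 1, DifferentiableAt ℂ f z)
    (hB : besovNorm0 f < ⊤) :
    UniformContinuousOn f (ball (0:ℂ) 1) ∧
      ∃ g : ℂ → ℂ, ContinuousOn g (closedBall (0:ℂ) 1) ∧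
        ∀ z ∈ ball (0:ℂ) 1, g z = f z := by
  have hd : DifferentiableOn ℂ f (ball 0 1) := fun z hz => (hf z hz).differentiableWithinAt
  have hdilate : ∀ ρ ∈ Set.Ioo (0 : ℝ) 1,
      UniformContinuousOn (fun z => f (ρ * z)) (closedBall 0 1) := fun ρ hρ =>
    (isCompact_closedBall 0 1).uniformContinuousOn_of_continuous <|
      hd.continuousOn.comp (by fun_prop) fun z hz => by
        simpa [abs_of_pos hρ.1] using
          mul_lt_one_of_nonneg_of_lt_one_left hρ.1.le hρ.2 (mem_closedBall_zero_iff.1 hz)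
  have hUC : UniformContinuousOn f (ball 0 1) :=
    (tendstoUniformlyOn_comp_mul_of_besovNorm0_ne_top hd hB.ne).uniformContinuousOn <|
      (eventually_of_mem (Ioo_mem_nhdsLT zero_lt_one) fun ρ hρ =>
        (hdilate ρ hρ).mono ball_subset_closedBall).frequently
  refine ⟨hUC, extendFrom (ball 0 1) f, ?_, extendFrom_extends hUC.continuousOn⟩
  simpa [closure_ball] using hUC.continuousOn_extendFrom_closure
end

section
/- Let f ∈ 𝓑(𝔻) and, for 0 < r < 1, define f_r(z) := f(rz) for z ∈ 𝔻. Then f_r ∈ 𝓑(𝔻) and lim_{r→1−} ‖f_r − f‖_𝓑 = 0, i.e. sup_{z∈𝔻} |f(rz) − f(z)| + ∫₀¹ sup_{|θ|≤π} |r f'(r s e^{iθ}) − f'(s e^{iθ})| ds → 0 as r → 1−. -/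
open MeasureTheory Metric Filter
open scoped ENNReal Topology

/-!
Let `M(s) = sup_θ |f'(s e^{iθ})|` be the integrand of `‖f‖_{𝓑₀}`. By the maximum modulus principle
`|f'(w)| ≤ M(s)` whenever `|w| ≤ s`, hence `|r f'(r w)| ≤ M(s)` on the circle `|w| = s` for
`0 ≤ r ≤ 1`. This gives `‖f_r‖_{𝓑₀} ≤ ‖f‖_{𝓑₀}` and dominates the integrand of `‖f_r - f‖_{𝓑₀}`
by `2 M`. Integrating `f'` along the segment from `r z` to `z` bounds `|f(r z) - f(z)|` by the tail
`∫_r^1 M`. For the integral term, split `(0, 1)` at `a < 1`: on `(0, a]` the integrand tends to `0`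
uniformly, `(r, w) ↦ r f'(r w)` being uniformly continuous on `[0, 1] × {|w| ≤ a}`, and the rest is
at most `2 ∫_a^1 M`. Only monotonicity of the lower Lebesgue integral is used, so the measurability
of the suprema over `θ` never has to be established.
-/

open Set Complex

lemma tendsto_setLIntegral_Ioo_nhdsLT {g : ℝ → ℝ≥0∞} {a b : ℝ} (hab : a < b)
    (h : ∫⁻ s in Ioo a b, g s ≠ ⊤) :
    Tendsto (fun c => ∫⁻ s in Ioo c b, g s) (𝓝[<] b) (𝓝 0) := by
  have hvol : Tendsto (fun c => volume.restrict (Ioo a b) (Ioo c b)) (𝓝[<] b) (𝓝 0) := by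
    have hlen : Tendsto (fun c => ENNReal.ofReal (b - c)) (𝓝[<] b) (𝓝 0) := by
      rw [← ENNReal.ofReal_zero, ← sub_self b]
      exact (ENNReal.tendsto_ofReal (tendsto_const_nhds.sub tendsto_id)).mono_left
        nhdsWithin_le_nhds
    refine tendsto_of_tendsto_of_tendsto_of_le_of_le tendsto_const_nhds hlen (fun _ => zero_le)
      fun c => ?_
    exact (Measure.restrict_apply_le _ _).trans_eq Real.volume_Ioo
  refine (tendsto_setLIntegral_zero h hvol).congr' ?_
  filter_upwards [Ioo_mem_nhdsLT hab] with c hc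
  rw [Measure.restrict_restrict measurableSet_Ioo,
    inter_eq_left.2 (Ioo_subset_Ioo_left hc.1.le)]

lemma ENNReal.tendsto_nhds_zero_of_le_add {ι κ : Type*} {l : Filter ι} {l' : Filter κ}
    [l'.NeBot] {x : ι → ℝ≥0∞} {u : κ → ι → ℝ≥0∞} {v : κ → ℝ≥0∞}
    (hu : ∀ᶠ a in l', Tendsto (u a) l (𝓝 0)) (hv : Tendsto v l' (𝓝 0))
    (hle : ∀ᶠ a in l', ∀ᶠ i in l, x i ≤ u a i + v a) :
    Tendsto x l (𝓝 0) := by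
  rw [ENNReal.tendsto_nhds_zero]
  intro ε hε
  have hε2 : 0 < ε / 2 := ENNReal.half_pos hε.ne'
  obtain ⟨a, hua, hva, hlea⟩ :=
    (hu.and ((ENNReal.tendsto_nhds_zero.1 hv _ hε2).and hle)).exists
  filter_upwards [ENNReal.tendsto_nhds_zero.1 hua _ hε2, hlea] with i hui hxi
  calc x i ≤ u a i + v a := hxi
    _ ≤ ε / 2 + ε / 2 := add_le_add hui hva
    _ = ε := ENNReal.add_halves ε

lemma tendsto_iSup_edist_of_continuousOn {α β E : Type*} [TopologicalSpace α]
    [TopologicalSpace β] [PseudoEMetricSpace E] {F : α → β → E} {U : Set α} {K : Set β} {x : α}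
    (hK : IsCompact K) (hF : ContinuousOn (Function.uncurry F) (U ×ˢ K)) (hx : x ∈ U) :
    Tendsto (fun p => ⨆ y ∈ K, edist (F p y) (F x y)) (𝓝[U] x) (𝓝 0) := by
  rw [ENNReal.tendsto_nhds_zero]
  intro ε hε
  obtain ⟨v, hv, hvK⟩ := hK.mem_uniformity_of_prod hF hx (edist_mem_uniformity hε)
  filter_upwards [hv] with p hp
  exact iSup₂_le fun y hy => (hvK p hp y hy).le

section CircleSup

variable {E : Type*} [NormedAddCommGroup E]

noncomputable def circleSup (g : ℂ → E) (s : ℝ) : ℝ≥0∞ :=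
  ⨆ θ ∈ Icc (-Real.pi) Real.pi, ‖g (s * exp (θ * I))‖ₑ

lemma besovNorm0_eq (f : ℂ → ℂ) : besovNorm0 f = ∫⁻ s in Ioo 0 1, circleSup (deriv f) s := rfl

lemma norm_ofReal_mul_exp_mul_I (s θ : ℝ) : ‖(s : ℂ) * exp (θ * I)‖ = |s| := by
  rw [norm_mul, norm_real, Real.norm_eq_abs, norm_exp_ofReal_mul_I, mul_one]

lemma enorm_le_circleSup [NormedSpace ℂ E] {g : ℂ → E} {s : ℝ}
    (hg : DifferentiableOn ℂ g (closedBall 0 s)) (hs : 0 < s) {w : ℂ} (hw : ‖w‖ ≤ s) :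
    ‖g w‖ₑ ≤ circleSup g s := by
  obtain ⟨x, hx, hmax⟩ := (isCompact_sphere (0 : ℂ) s).exists_isMaxOn
    (NormedSpace.sphere_nonempty.mpr hs.le) (hg.continuousOn.mono sphere_subset_closedBall).norm
  have hwx : ‖g w‖ ≤ ‖g x‖ := by
    refine Complex.norm_le_of_forall_mem_frontier_norm_le (isBounded_ball (x := (0 : ℂ)) (r := s))
      ?_ (fun z hz => ?_) ?_
    · exact hg.diffContOnCl_ball subset_rfl
    · exact hmax (frontier_ball_subset_sphere hz)
    · rwa [closure_ball 0 hs.ne', mem_closedBall_zero_iff]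
  have hxs : (s : ℂ) * exp (x.arg * I) = x := by
    rw [← mem_sphere_zero_iff_norm.mp hx, norm_mul_exp_arg_mul_I]
  calc ‖g w‖ₑ ≤ ‖g x‖ₑ := by simpa only [enorm_le_iff_norm_le] using hwx
    _ ≤ circleSup g s :=
      le_iSup₂_of_le x.arg ⟨(neg_pi_lt_arg x).le, arg_le_pi x⟩ (by rw [hxs])

lemma lintegral_circleSup_le_add (g : ℂ → E) {a : ℝ} (ha : a ≤ 1) :
    ∫⁻ s in Ioo 0 1, circleSup g s ≤
      (⨆ w ∈ closedBall (0 : ℂ) a, ‖g w‖ₑ) + ∫⁻ s in Ioo a 1, circleSup g s := by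
  have hsplit : Ioo (0 : ℝ) 1 ⊆ Ioc 0 a ∪ Ioo a 1 := fun s hs =>
    (le_or_gt s a).imp (fun h => ⟨hs.1, h⟩) (fun h => ⟨h, hs.2⟩)
  have hinner : ∫⁻ s in Ioc 0 a, circleSup g s ≤ ⨆ w ∈ closedBall (0 : ℂ) a, ‖g w‖ₑ := by
    calc ∫⁻ s in Ioc 0 a, circleSup g s
        ≤ ∫⁻ _ in Ioc 0 a, ⨆ w ∈ closedBall (0 : ℂ) a, ‖g w‖ₑ :=
          setLIntegral_mono' measurableSet_Ioc fun s hs => iSup₂_le fun θ _ =>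
            le_iSup₂_of_le (f := fun w _ => ‖g w‖ₑ) _ (by
              rw [mem_closedBall_zero_iff, norm_ofReal_mul_exp_mul_I, abs_of_pos hs.1]
              exact hs.2) le_rfl
      _ ≤ ⨆ w ∈ closedBall (0 : ℂ) a, ‖g w‖ₑ := by
          rw [setLIntegral_const, Real.volume_Ioc, sub_zero]
          exact mul_le_of_le_one_right zero_le (ENNReal.ofReal_le_one.2 ha)
  calc ∫⁻ s in Ioo 0 1, circleSup g s ≤ ∫⁻ s in Ioc 0 a ∪ Ioo a 1, circleSup g s :=
        lintegral_mono_set hsplit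
    _ ≤ _ := (lintegral_union_le _ _ _).trans (add_le_add_left hinner _)

end CircleSup

section Holomorphic

variable {f : ℂ → ℂ}

lemma enorm_deriv_le_circleSup (hf : DifferentiableOn ℂ f (ball 0 1)) {s : ℝ}
    (hs : s ∈ Ioo 0 1) {w : ℂ} (hw : ‖w‖ ≤ s) : ‖deriv f w‖ₑ ≤ circleSup (deriv f) s :=
  enorm_le_circleSup ((hf.deriv isOpen_ball).mono (closedBall_subset_ball hs.2)) hs.1 hw

lemma enorm_mul_deriv_le_circleSup (hf : DifferentiableOn ℂ f (ball 0 1)) {r s : ℝ}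
    (hr : r ∈ Icc 0 1) (hs : s ∈ Ioo 0 1) {w : ℂ} (hw : ‖w‖ ≤ s) :
    ‖(r : ℂ) * deriv f (r * w)‖ₑ ≤ circleSup (deriv f) s := by
  have hr_norm : ‖(r : ℂ)‖ ≤ 1 := by rw [norm_real, Real.norm_of_nonneg hr.1]; exact hr.2
  have hrw : ‖(r : ℂ) * w‖ ≤ s := by
    rw [norm_mul]
    nlinarith [norm_nonneg w, norm_nonneg (r : ℂ)]
  calc ‖(r : ℂ) * deriv f (r * w)‖ₑ = ‖(r : ℂ)‖ₑ * ‖deriv f (r * w)‖ₑ := enorm_mul _ _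
    _ ≤ ‖deriv f (r * w)‖ₑ :=
        mul_le_of_le_one_left zero_le (by rw [← ofReal_norm]; exact ENNReal.ofReal_le_one.2 hr_norm)
    _ ≤ circleSup (deriv f) s := enorm_deriv_le_circleSup hf hs hrw

lemma besovNorm0_comp_mul_le (hf : DifferentiableOn ℂ f (ball 0 1)) {r : ℝ} (hr : r ∈ Icc 0 1) :
    besovNorm0 (fun z => f (r * z)) ≤ besovNorm0 f := by
  rw [besovNorm0_eq, besovNorm0_eq]
  refine setLIntegral_mono' measurableSet_Ioo fun s hs => iSup₂_le fun θ _ => ?_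
  rw [deriv_comp_mul_left, smul_eq_mul]
  exact enorm_mul_deriv_le_circleSup hf hr hs
    (by rw [norm_ofReal_mul_exp_mul_I, abs_of_pos hs.1])

lemma circleSup_mul_deriv_comp_sub_le (hf : DifferentiableOn ℂ f (ball 0 1)) {r s : ℝ}
    (hr : r ∈ Icc 0 1) (hs : s ∈ Ioo 0 1) :
    circleSup (fun w => (r : ℂ) * deriv f (r * w) - deriv f w) s ≤
      2 * circleSup (deriv f) s := by
  refine iSup₂_le fun θ _ => ?_
  have hw : ‖(s : ℂ) * exp (θ * I)‖ ≤ s := by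
    rw [norm_ofReal_mul_exp_mul_I, abs_of_pos hs.1]
  calc _ ≤ ‖(r : ℂ) * deriv f (r * (s * exp (θ * I)))‖ₑ + ‖deriv f (s * exp (θ * I))‖ₑ :=
        enorm_sub_le
    _ ≤ circleSup (deriv f) s + circleSup (deriv f) s :=
        add_le_add (enorm_mul_deriv_le_circleSup hf hr hs hw) (enorm_deriv_le_circleSup hf hs hw)
    _ = 2 * circleSup (deriv f) s := (two_mul _).symm

lemma enorm_comp_mul_sub_le (hf : DifferentiableOn ℂ f (ball 0 1)) {r : ℝ} (hr : r ∈ Icc 0 1)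
    {z : ℂ} (hz : z ∈ ball 0 1) :
    ‖f (r * z) - f z‖ₑ ≤ ∫⁻ t in Ioo r 1, circleSup (deriv f) t := by
  rw [mem_ball_zero_iff] at hz
  set φ : ℝ → ℂ := fun t => f (t * z)
  have hball : ∀ t ∈ Icc r 1, (t : ℂ) * z ∈ ball 0 1 := fun t ht => by
    rw [mem_ball_zero_iff, norm_mul, norm_real, Real.norm_of_nonneg (hr.1.trans ht.1)]
    nlinarith [ht.2, norm_nonneg z]
  have hφ : ContDiffOn ℝ 1 φ (Icc r 1) :=
    ((hf.contDiffOn isOpen_ball).restrict_scalars ℝ).comp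
      (ofRealCLM.contDiff.mul contDiff_const).contDiffOn hball
  have hderiv : ∀ t ∈ Icc r 1, deriv φ t = deriv f (t * z) * z := fun t ht => by
    have hinner : HasDerivAt (fun t : ℝ => (t : ℂ) * z) z t := by
      simpa using (ofRealCLM.hasDerivAt (x := t)).mul_const z
    exact ((hf.differentiableAt (isOpen_ball.mem_nhds (hball t ht))).hasDerivAt.comp t
      hinner).deriv
  calc ‖f (r * z) - f z‖ₑ = ‖φ 1 - φ r‖ₑ := by simp only [φ, ofReal_one, one_mul, enorm_sub_rev]
    _ ≤ ∫⁻ t in Icc r 1, ‖deriv φ t‖ₑ := enorm_sub_le_lintegral_deriv_of_contDiffOn_Icc hφ hr.2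
    _ = ∫⁻ t in Ioo r 1, ‖deriv φ t‖ₑ := by rw [restrict_Ioo_eq_restrict_Icc]
    _ ≤ ∫⁻ t in Ioo r 1, circleSup (deriv f) t := by
      refine setLIntegral_mono' measurableSet_Ioo fun t ht => ?_
      have ht₀ : 0 < t := hr.1.trans_lt ht.1
      rw [hderiv t (Ioo_subset_Icc_self ht), enorm_mul]
      refine (mul_le_of_le_one_right zero_le ?_).trans
        (enorm_deriv_le_circleSup hf ⟨ht₀, ht.2⟩ ?_)
      · rw [← ofReal_norm]; exact ENNReal.ofReal_le_one.2 hz.le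
      · rw [norm_mul, norm_real, Real.norm_of_nonneg ht₀.le]
        nlinarith [norm_nonneg z]

lemma continuousOn_mul_deriv_comp_mul (hf : DifferentiableOn ℂ f (ball 0 1)) {a : ℝ}
    (ha : a < 1) :
    ContinuousOn (fun p : ℝ × ℂ => (p.1 : ℂ) * deriv f (p.1 * p.2))
      (Icc 0 1 ×ˢ closedBall 0 a) := by
  have hmaps : MapsTo (fun p : ℝ × ℂ => (p.1 : ℂ) * p.2) (Icc 0 1 ×ˢ closedBall 0 a)
      (ball 0 1) := fun p hp => by
    rw [mem_ball_zero_iff, norm_mul, norm_real, Real.norm_of_nonneg hp.1.1]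
    have := mem_closedBall_zero_iff.1 hp.2
    nlinarith [hp.1.2, norm_nonneg p.2]
  exact (continuous_ofReal.comp continuous_fst).continuousOn.mul
    ((hf.deriv isOpen_ball).continuousOn.comp (by fun_prop) hmaps)

lemma tendsto_lintegral_circleSup_dilation_sub (hf : DifferentiableOn ℂ f (ball 0 1))
    (hB : besovNorm0 f ≠ ⊤) :
    Tendsto (fun r : ℝ =>
        ∫⁻ s in Ioo 0 1, circleSup (fun w => (r : ℂ) * deriv f (r * w) - deriv f w) s)
      (𝓝[<] 1) (𝓝 0) := by
  rw [besovNorm0_eq] at hB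
  set F : ℝ → ℂ → ℂ := fun r w => r * deriv f (r * w)
  have hF1 : ∀ w, F 1 w = deriv f w := by simp [F]
  refine ENNReal.tendsto_nhds_zero_of_le_add (l' := 𝓝[<] (1 : ℝ))
    (u := fun a r => ⨆ w ∈ closedBall (0 : ℂ) a, edist (F r w) (F 1 w))
    (v := fun a => 2 * ∫⁻ s in Ioo a 1, circleSup (deriv f) s) ?_ ?_ ?_
  · filter_upwards [Ioo_mem_nhdsLT zero_lt_one] with a ha
    exact (tendsto_iSup_edist_of_continuousOn (isCompact_closedBall 0 a)
      (continuousOn_mul_deriv_comp_mul hf ha.2) (right_mem_Icc.2 zero_le_one)).mono_left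
      (nhdsWithin_le_of_mem (Icc_mem_nhdsLT zero_lt_one))
  · simpa only [mul_zero] using ENNReal.Tendsto.const_mul
      (tendsto_setLIntegral_Ioo_nhdsLT zero_lt_one hB) (Or.inr ENNReal.ofNat_ne_top)
  · filter_upwards [Ioo_mem_nhdsLT zero_lt_one] with a ha
    filter_upwards [Ioc_mem_nhdsLT zero_lt_one] with r hr
    refine (lintegral_circleSup_le_add _ ha.2.le).trans (add_le_add ?_ ?_)
    · exact iSup₂_mono fun w _ => by rw [edist_eq_enorm_sub, hF1]
    · rw [← lintegral_const_mul' _ _ ENNReal.ofNat_ne_top]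
      exact setLIntegral_mono' measurableSet_Ioo fun s hs =>
        circleSup_mul_deriv_comp_sub_le hf ⟨hr.1.le, hr.2⟩ ⟨ha.1.trans hs.1, hs.2⟩

lemma iSup_norm_comp_mul_sub_le (hf : DifferentiableOn ℂ f (ball 0 1))
    (hB : besovNorm0 f ≠ ⊤) {r : ℝ} (hr : r ∈ Icc 0 1) :
    ⨆ z : ball (0 : ℂ) 1, ‖f (r * z) - f z‖ ≤ (∫⁻ t in Ioo r 1, circleSup (deriv f) t).toReal := by
  have hfin : ∫⁻ t in Ioo r 1, circleSup (deriv f) t ≠ ⊤ :=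
    ne_top_of_le_ne_top hB (lintegral_mono_set (Ioo_subset_Ioo_left hr.1))
  refine Real.iSup_le (fun z => ?_) ENNReal.toReal_nonneg
  rw [← toReal_enorm]
  exact ENNReal.toReal_mono hfin (enorm_comp_mul_sub_le hf hr z.2)

end Holomorphic

/-- For `f ∈ 𝓑(𝔻)`, the dilations `f_r(z) := f(rz)` belong to `𝓑(𝔻)` and
`‖f_r − f‖_𝓑 → 0` as `r → 1−`. -/
theorem besov_dilation_approx (f : ℂ → ℂ)
    (hf : ∀ z ∈ ball (0:ℂ) 1, DifferentiableAt ℂ f z)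
    (hB : besovNorm0 f < ⊤) :
    (∀ r : ℝ, 0 < r → r < 1 → besovNorm0 (fun z => f ((r : ℂ) * z)) < ⊤) ∧
    Tendsto (fun r : ℝ =>
        (⨆ z : ball (0:ℂ) 1, ‖f ((r : ℂ) * (z : ℂ)) - f (z : ℂ)‖) +
        (∫⁻ s in Set.Ioo (0:ℝ) 1,
          ⨆ θ ∈ Set.Icc (-Real.pi) Real.pi,
            (‖(r : ℂ) * deriv f ((r : ℂ) * ((s : ℂ) * Complex.exp ((θ : ℂ) * Complex.I)))
              - deriv f ((s : ℂ) * Complex.exp ((θ : ℂ) * Complex.I))‖₊ : ℝ≥0∞)).toReal)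
      (nhdsWithin 1 (Set.Iio 1)) (nhds 0) := by
  have hf' : DifferentiableOn ℂ f (ball 0 1) := fun z hz => (hf z hz).differentiableWithinAt
  refine ⟨fun r hr0 hr1 => (besovNorm0_comp_mul_le hf' ⟨hr0.le, hr1.le⟩).trans_lt hB, ?_⟩
  have htoReal := ENNReal.tendsto_toReal ENNReal.zero_ne_top
  have hsup : Tendsto (fun r : ℝ => ⨆ z : ball (0 : ℂ) 1, ‖f (r * z) - f z‖) (𝓝[<] 1) (𝓝 0) := by
    refine squeeze_zero' (.of_forall fun r => Real.iSup_nonneg fun z => norm_nonneg _) ?_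
      (htoReal.comp (tendsto_setLIntegral_Ioo_nhdsLT zero_lt_one hB.ne))
    filter_upwards [Ioo_mem_nhdsLT zero_lt_one] with r hr
    exact iSup_norm_comp_mul_sub_le hf' hB.ne ⟨hr.1.le, hr.2.le⟩
  have hint := hsup.add (htoReal.comp (tendsto_lintegral_circleSup_dilation_sub hf' hB.ne))
  rwa [ENNReal.toReal_zero, add_zero] at hint
end

section
/- Let f and g be holomorphic on 𝔻, with ‖f‖_{𝓑₀} := ∫₀¹ sup_{|θ|≤π} |f'(r e^{iθ})| dr < ∞ and ‖g‖_{𝓔₀} := sup_{0<r<1} (1−r) ∫_{−π}^{π} |g'(r e^{iθ})| dθ < ∞. Then ∫_𝔻 log(1/|z|) |f'(z)| |g'(conj(z))| dA(z) ≤ ‖g‖_{𝓔₀} ‖f‖_{𝓑₀}; in particular the pairing ⟨g,f⟩_𝓑 := ∫_𝔻 log(1/|z|) f'(z) g'(conj(z)) dA(z) is absolutely convergent. -/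
/-!
In polar coordinates `dA = r dr dθ`, and `r log (1/r) ≤ 1 - r`. Since conjugation maps the circle
of radius `r` to itself by `θ ↦ -θ`, the integral over that circle is therefore at most
`sup_θ |f'(r e^{iθ})| · (1 - r) ∫ |g'(r e^{iθ})| dθ ≤ sup_θ |f'(r e^{iθ})| · ‖g‖_{𝓔₀}`, and
integrating in `r` gives `‖g‖_{𝓔₀} ‖f‖_{𝓑₀}`. Absolute convergence of the pairing is the
finiteness of the left-hand side.
-/

open MeasureTheory Metric
open scoped ENNReal

/-- The seminorm `‖g‖_{𝓔₀} = sup_{0<r<1} (1−r) ∫_{−π}^{π} |g'(r e^{iθ})| dθ`. -/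
noncomputable def eNorm0 (g : ℂ → ℂ) : ℝ≥0∞ :=
  ⨆ r ∈ Set.Ioo (0:ℝ) 1, ENNReal.ofReal (1 - r) *
    ∫⁻ θ in Set.Ioo (-Real.pi) Real.pi,
      (‖deriv g ((r : ℂ) * Complex.exp ((θ : ℂ) * Complex.I))‖₊ : ℝ≥0∞)

open Set Real ComplexConjugate

theorem setLIntegral_comp_neg_Ioo (h : ℝ → ℝ≥0∞) (a : ℝ) :
    ∫⁻ θ in Ioo (-a) a, h (-θ) = ∫⁻ θ in Ioo (-a) a, h θ := by
  have hsymm : ∀ θ : ℝ, -θ ∈ Ioo (-a) a ↔ θ ∈ Ioo (-a) a := fun θ => by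
    simp only [mem_Ioo, neg_lt_neg_iff, neg_lt]
    tauto
  rw [← lintegral_indicator measurableSet_Ioo, ← lintegral_indicator measurableSet_Ioo,
    ← lintegral_neg_eq_self]
  congr 1 with θ
  by_cases hθ : θ ∈ Ioo (-a) a <;> simp [indicator, hsymm, hθ]

/-- Only an inequality, so that `F` need not be measurable (Tonelli via `lintegral_prod_le`). -/
theorem setLIntegral_ball_le_polar (F : ℂ → ℝ≥0∞) (R : ℝ) :
    ∫⁻ z in ball (0 : ℂ) R, F z ≤
      ∫⁻ r in Ioo 0 R, ∫⁻ θ in Ioo (-π) π, ENNReal.ofReal r * F (circleMap 0 r θ) := by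
  set G : ℝ × ℝ → ℝ≥0∞ := fun p => ENNReal.ofReal p.1 * F (circleMap 0 p.1 p.2)
  have hpolar : ∀ p ∈ polarCoord.target,
      ENNReal.ofReal p.1 • (ball (0 : ℂ) R).indicator F (Complex.polarCoord.symm p)
        = (Iio R ×ˢ univ).indicator G p := by
    rintro ⟨r, θ⟩ ⟨hr : 0 < r, -⟩
    have hsymm : Complex.polarCoord.symm (r, θ) = circleMap 0 r θ := by
      simp [circleMap_zero, Complex.exp_mul_I, ← Complex.ofReal_cos, ← Complex.ofReal_sin]
    by_cases hrR : r < R <;> simp [indicator, hsymm, G, hrR, abs_of_pos hr]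
  have htarget : polarCoord.target ∩ Iio R ×ˢ univ = Ioo 0 R ×ˢ Ioo (-π) π := by
    rw [polarCoord_target, prod_inter_prod, Ioi_inter_Iio, inter_univ]
  calc ∫⁻ z in ball (0 : ℂ) R, F z
      = ∫⁻ p in polarCoord.target, (Iio R ×ˢ univ).indicator G p := by
        rw [← lintegral_indicator measurableSet_ball, ← Complex.lintegral_comp_polarCoord_symm,
          setLIntegral_congr_fun polarCoord.open_target.measurableSet hpolar]
    _ = ∫⁻ p in Ioo 0 R ×ˢ Ioo (-π) π, G p := by
        rw [lintegral_indicator (measurableSet_Iio.prod MeasurableSet.univ),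
          Measure.restrict_restrict (measurableSet_Iio.prod MeasurableSet.univ), inter_comm,
          htarget]
    _ ≤ _ := by
        rw [Measure.volume_eq_prod, ← Measure.prod_restrict]
        exact lintegral_prod_le G

theorem mul_log_one_div_le_one_sub {r : ℝ} (hr : 0 < r) : r * log (1 / r) ≤ 1 - r :=
  calc r * log (1 / r) ≤ r * (1 / r - 1) :=
        mul_le_mul_of_nonneg_left (log_le_sub_one_of_pos (one_div_pos.mpr hr)) hr.le
    _ = 1 - r := by field_simp

noncomputable def circleSupDeriv (f : ℂ → ℂ) (r : ℝ) : ℝ≥0∞ :=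
  ⨆ θ ∈ Icc (-π) π, (‖deriv f (circleMap 0 r θ)‖₊ : ℝ≥0∞)

theorem besovNorm0_eq_lintegral_circleSupDeriv (f : ℂ → ℂ) :
    besovNorm0 f = ∫⁻ r in Ioo 0 1, circleSupDeriv f r := by
  simp only [besovNorm0, circleSupDeriv, circleMap_zero]

theorem ofReal_one_sub_mul_setLIntegral_deriv_circleMap_le_eNorm0 (g : ℂ → ℂ) {r : ℝ}
    (hr : r ∈ Ioo 0 1) :
    ENNReal.ofReal (1 - r) * ∫⁻ θ in Ioo (-π) π, (‖deriv g (circleMap 0 r θ)‖₊ : ℝ≥0∞)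
      ≤ eNorm0 g := by
  simp only [circleMap_zero]
  exact le_biSup (fun r : ℝ => ENNReal.ofReal (1 - r) * ∫⁻ θ in Ioo (-π) π,
    (‖deriv g (r * Complex.exp (θ * Complex.I))‖₊ : ℝ≥0∞)) hr

noncomputable def pairingDensity (f g : ℂ → ℂ) (z : ℂ) : ℝ≥0∞ :=
  ENNReal.ofReal (log (1 / ‖z‖)) * ‖deriv f z‖₊ * ‖deriv g (conj z)‖₊

section PairingDensity

variable (f g : ℂ → ℂ) {r : ℝ}

theorem ofReal_mul_pairingDensity_circleMap_le (hr : r ∈ Ioo 0 1) {θ : ℝ}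
    (hθ : θ ∈ Icc (-π) π) :
    ENNReal.ofReal r * pairingDensity f g (circleMap 0 r θ)
      ≤ circleSupDeriv f r * (ENNReal.ofReal (1 - r) * ‖deriv g (circleMap 0 r (-θ))‖₊) := by
  have hlog : ENNReal.ofReal r * ENNReal.ofReal (log (1 / r)) ≤ ENNReal.ofReal (1 - r) := by
    rw [← ENNReal.ofReal_mul hr.1.le]
    exact ENNReal.ofReal_le_ofReal (mul_log_one_div_le_one_sub hr.1)
  have hsup : (‖deriv f (circleMap 0 r θ)‖₊ : ℝ≥0∞) ≤ circleSupDeriv f r :=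
    le_biSup (fun θ => (‖deriv f (circleMap 0 r θ)‖₊ : ℝ≥0∞)) hθ
  rw [pairingDensity, norm_circleMap_zero, abs_of_pos hr.1, conj_circleMap_zero]
  calc ENNReal.ofReal r * (ENNReal.ofReal (log (1 / r)) * ‖deriv f (circleMap 0 r θ)‖₊
          * ‖deriv g (circleMap 0 r (-θ))‖₊)
      = ENNReal.ofReal r * ENNReal.ofReal (log (1 / r)) * ‖deriv f (circleMap 0 r θ)‖₊
          * ‖deriv g (circleMap 0 r (-θ))‖₊ := by ring
    _ ≤ ENNReal.ofReal (1 - r) * circleSupDeriv f r * ‖deriv g (circleMap 0 r (-θ))‖₊ := by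
        gcongr
    _ = _ := by ring

theorem setLIntegral_pairingDensity_circleMap_le (hr : r ∈ Ioo 0 1) :
    ∫⁻ θ in Ioo (-π) π, ENNReal.ofReal r * pairingDensity f g (circleMap 0 r θ)
      ≤ circleSupDeriv f r * eNorm0 g :=
  calc ∫⁻ θ in Ioo (-π) π, ENNReal.ofReal r * pairingDensity f g (circleMap 0 r θ)
      ≤ ∫⁻ θ in Ioo (-π) π, circleSupDeriv f r *
          (ENNReal.ofReal (1 - r) * ‖deriv g (circleMap 0 r (-θ))‖₊) :=
        setLIntegral_mono' measurableSet_Ioo fun θ hθ =>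
          ofReal_mul_pairingDensity_circleMap_le f g hr (Ioo_subset_Icc_self hθ)
    _ = circleSupDeriv f r * (ENNReal.ofReal (1 - r) *
          ∫⁻ θ in Ioo (-π) π, (‖deriv g (circleMap 0 r θ)‖₊ : ℝ≥0∞)) := by
        rw [lintegral_const_mul _ (by fun_prop), lintegral_const_mul _ (by fun_prop),
          setLIntegral_comp_neg_Ioo (fun θ => (‖deriv g (circleMap 0 r θ)‖₊ : ℝ≥0∞))]
    _ ≤ circleSupDeriv f r * eNorm0 g := by
        gcongr
        exact ofReal_one_sub_mul_setLIntegral_deriv_circleMap_le_eNorm0 g hr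

theorem setLIntegral_pairingDensity_le (hg : eNorm0 g ≠ ⊤) :
    ∫⁻ z in ball (0 : ℂ) 1, pairingDensity f g z ≤ eNorm0 g * besovNorm0 f :=
  calc ∫⁻ z in ball (0 : ℂ) 1, pairingDensity f g z
      ≤ ∫⁻ r in Ioo 0 1, ∫⁻ θ in Ioo (-π) π,
          ENNReal.ofReal r * pairingDensity f g (circleMap 0 r θ) :=
        setLIntegral_ball_le_polar _ 1
    _ ≤ ∫⁻ r in Ioo 0 1, eNorm0 g * circleSupDeriv f r :=
        setLIntegral_mono' measurableSet_Ioo fun r hr =>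
          (setLIntegral_pairingDensity_circleMap_le f g hr).trans_eq (mul_comm _ _)
    _ = eNorm0 g * besovNorm0 f := by
        rw [lintegral_const_mul' _ _ hg, besovNorm0_eq_lintegral_circleSupDeriv]

theorem integrableOn_log_smul_deriv_mul_deriv_conj
    (hfin : ∫⁻ z in ball (0 : ℂ) 1, pairingDensity f g z < ⊤) :
    IntegrableOn (fun z : ℂ => log (1 / ‖z‖) • (deriv f z * deriv g (conj z))) (ball 0 1) := by
  have hlog : ∀ z ∈ ball (0 : ℂ) 1, 0 ≤ log (1 / ‖z‖) := fun z hz => by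
    rw [one_div, log_inv, neg_nonneg]
    exact log_nonpos (norm_nonneg z) (mem_ball_zero_iff.mp hz).le
  refine ⟨Measurable.aestronglyMeasurable (by fun_prop), ?_⟩
  rw [HasFiniteIntegral]
  convert hfin using 1
  refine setLIntegral_congr_fun measurableSet_ball fun z hz => ?_
  rw [pairingDensity, enorm_smul, enorm_mul, Real.enorm_eq_ofReal (hlog z hz), mul_assoc]
  rfl

end PairingDensity

theorem besov_duality_estimate_general (f g : ℂ → ℂ)
    (hfB : besovNorm0 f < ⊤) (hgE : eNorm0 g < ⊤) :
    (∫⁻ z in ball (0:ℂ) 1,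
        ENNReal.ofReal (Real.log (1 / ‖z‖)) * ‖deriv f z‖₊ * ‖deriv g ((starRingEnd ℂ) z)‖₊)
      ≤ eNorm0 g * besovNorm0 f ∧
    IntegrableOn
      (fun z : ℂ => Real.log (1 / ‖z‖) • (deriv f z * deriv g ((starRingEnd ℂ) z)))
      (ball (0:ℂ) 1) := by
  have hle := setLIntegral_pairingDensity_le f g hgE.ne
  exact ⟨hle, integrableOn_log_smul_deriv_mul_deriv_conj f g
    (hle.trans_lt (ENNReal.mul_lt_top hgE hfB))⟩

/-- The partial duality between `𝓑(𝔻)` and `𝓔(𝔻)`: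
`∫_𝔻 log(1/|z|) |f'(z)| |g'(z̄)| dA(z) ≤ ‖g‖_{𝓔₀} ‖f‖_{𝓑₀}`; in particular the pairing
`⟨g,f⟩_𝓑 = ∫_𝔻 log(1/|z|) f'(z) g'(z̄) dA(z)` is absolutely convergent. -/
theorem besov_duality_estimate (f g : ℂ → ℂ)
    (hf : ∀ z ∈ ball (0:ℂ) 1, DifferentiableAt ℂ f z)
    (hg : ∀ z ∈ ball (0:ℂ) 1, DifferentiableAt ℂ g z)
    (hfB : besovNorm0 f < ⊤) (hgE : eNorm0 g < ⊤) :
    (∫⁻ z in ball (0:ℂ) 1,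
        ENNReal.ofReal (Real.log (1 / ‖z‖)) * ‖deriv f z‖₊ * ‖deriv g ((starRingEnd ℂ) z)‖₊)
      ≤ eNorm0 g * besovNorm0 f ∧
    IntegrableOn
      (fun z : ℂ => Real.log (1 / ‖z‖) • (deriv f z * deriv g ((starRingEnd ℂ) z)))
      (ball (0:ℂ) 1) :=
  besov_duality_estimate_general f g hfB hgE
end

section
/- Let 0 < r < 1 and let h : [−π,π] → ℂ be essentially bounded and measurable. Define G(w) := ∫_{−π}^{π} h(θ) (1 − w r e^{−iθ})^{−2} dθ for w ∈ 𝔻. Then G is holomorphic on 𝔻, G ∈ 𝓑(𝔻), and ‖G‖_𝓑 ≤ 6π (1−r)^{−1} ‖h‖_{L^∞}. -/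
open MeasureTheory Metric
open scoped ENNReal

/-!
Write `G(w) = H(w r)` with `H(s) = ∫ h(θ) k_s(θ)² dθ`, where `k_s(θ) = (1 - s e^{-iθ})⁻¹`.
Differentiating under the integral sign gives `H'(s) = ∫ h(θ) 2 e^{-iθ} k_s(θ)³ dθ`. Both
integrals are bounded by `‖h‖_∞ ∫ |k_s|² = 2π ‖h‖_∞ / (1 - |s|²)` (Poisson's formula for the
constant function `1`), times `|k_s| ≤ (1 - |s|)⁻¹` in the case of `H'`. Hence
`|G| ≤ 2π ‖h‖_∞ / (1 - r)` and `|G'(w)| ≤ 4π ‖h‖_∞ r / (1 - |w| r)²`, and the integral of the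
latter bound over `|w| ∈ (0, 1)` is `4π ‖h‖_∞ r / (1 - r)`.
-/

open Set Real Topology
open Complex (I exp)

/-- `e^{iθ} / (e^{iθ} - s)`, the Cauchy kernel of the unit circle. -/
noncomputable def cauchyKernel (s : ℂ) (θ : ℝ) : ℂ := (1 - s * exp (-(θ : ℂ) * I))⁻¹

lemma norm_exp_neg_mul_I (θ : ℝ) : ‖exp (-(θ : ℂ) * I)‖ = 1 := by
  rw [Complex.norm_exp]; simp

lemma one_sub_norm_le_norm_one_sub_mul_exp (s : ℂ) (θ : ℝ) :
    1 - ‖s‖ ≤ ‖1 - s * exp (-(θ : ℂ) * I)‖ := by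
  have := norm_sub_norm_le (1 : ℂ) (s * exp (-(θ : ℂ) * I))
  rwa [norm_one, norm_mul, norm_exp_neg_mul_I, mul_one] at this

lemma one_sub_mul_exp_ne_zero {s : ℂ} (hs : ‖s‖ < 1) (θ : ℝ) :
    1 - s * exp (-(θ : ℂ) * I) ≠ 0 :=
  norm_pos_iff.mp ((sub_pos.mpr hs).trans_le (one_sub_norm_le_norm_one_sub_mul_exp s θ))

lemma norm_cauchyKernel_le {s : ℂ} (hs : ‖s‖ < 1) (θ : ℝ) :
    ‖cauchyKernel s θ‖ ≤ (1 - ‖s‖)⁻¹ := by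
  rw [cauchyKernel, norm_inv]
  exact inv_anti₀ (sub_pos.mpr hs) (one_sub_norm_le_norm_one_sub_mul_exp s θ)

lemma continuous_cauchyKernel {s : ℂ} (hs : ‖s‖ < 1) : Continuous (cauchyKernel s) :=
  Continuous.inv₀ (by fun_prop) (one_sub_mul_exp_ne_zero hs)

lemma norm_circleMap_zero_one_sub (s : ℂ) (θ : ℝ) :
    ‖circleMap 0 1 θ - s‖ = ‖1 - s * exp (-(θ : ℂ) * I)‖ := by
  have : circleMap 0 1 θ - s = exp ((θ : ℂ) * I) * (1 - s * exp (-(θ : ℂ) * I)) := by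
    rw [circleMap_zero, mul_sub, neg_mul, Complex.exp_neg]
    field_simp
    simp
  rw [this, norm_mul, Complex.norm_exp_ofReal_mul_I, one_mul]

/-- Poisson's formula for the constant function `1`. -/
theorem integral_norm_cauchyKernel_sq {s : ℂ} (hs : ‖s‖ < 1) :
    ∫ θ in -π..π, ‖cauchyKernel s θ‖ ^ 2 = 2 * π / (1 - ‖s‖ ^ 2) := by
  have hP (θ : ℝ) :
      poissonKernel 0 s (circleMap 0 1 θ) = (1 - ‖s‖ ^ 2) * ‖cauchyKernel s θ‖ ^ 2 := by
    simp [poissonKernel, norm_circleMap_zero_one_sub, cauchyKernel, div_eq_mul_inv]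
  have hpoisson := (diffContOnCl_const (c := (1 : ℂ))).circleAverage_poissonKernel_smul
    (c := 0) (R := 1) (mem_ball_zero_iff.mpr hs)
  rw [Real.circleAverage_eq_integral_add (-π), intervalIntegral.integral_comp_add_right
    (fun θ => (poissonKernel 0 s • fun _ => (1 : ℂ)) (circleMap 0 1 θ))] at hpoisson
  have key : (2 * π)⁻¹ * ((1 - ‖s‖ ^ 2) * ∫ θ in -π..π, ‖cauchyKernel s θ‖ ^ 2) = 1 := by
    simp only [Pi.smul_apply', hP, Complex.real_smul, mul_one, intervalIntegral.integral_ofReal,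
      intervalIntegral.integral_const_mul, zero_add, show 2 * π + -π = π by ring] at hpoisson
    exact_mod_cast hpoisson
  have hs2 : 0 < 1 - ‖s‖ ^ 2 := by nlinarith [norm_nonneg s]
  rw [eq_div_iff hs2.ne']
  field_simp at key
  linarith

theorem besovNorm0_le_of_norm_deriv_le {f : ℂ → ℂ} {g : ℝ → ℝ}
    (hfg : ∀ z : ℂ, ‖z‖ < 1 → ‖deriv f z‖ ≤ g ‖z‖) :
    besovNorm0 f ≤ ∫⁻ ρ in Ioo 0 1, ENNReal.ofReal (g ρ) := by
  refine setLIntegral_mono' measurableSet_Ioo fun ρ hρ => iSup₂_le fun θ _ => ?_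
  have hnorm : ‖(ρ : ℂ) * exp (θ * I)‖ = ρ := by
    rw [norm_mul, Complex.norm_exp_ofReal_mul_I, Complex.norm_real, Real.norm_of_nonneg hρ.1.le,
      mul_one]
  rw [← enorm_eq_nnnorm, ← ofReal_norm]
  refine ENNReal.ofReal_le_ofReal ?_
  simpa only [hnorm] using hfg _ (hnorm.trans_lt hρ.2)

lemma integral_div_one_sub_mul_sq {c r : ℝ} (hr : r < 1) :
    ∫ ρ in (0 : ℝ)..1, c * r / (1 - ρ * r) ^ 2 = c * r / (1 - r) := by
  have hne : ∀ ρ ∈ uIcc (0 : ℝ) 1, 1 - ρ * r ≠ 0 := fun ρ hρ => by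
    rw [uIcc_of_le zero_le_one] at hρ
    rcases le_or_gt r 0 with hr0 | hr0 <;> nlinarith [hρ.1, hρ.2]
  have hderiv : ∀ ρ ∈ uIcc (0 : ℝ) 1,
      HasDerivAt (fun ρ => c * (1 - ρ * r)⁻¹) (c * r / (1 - ρ * r) ^ 2) ρ := fun ρ hρ => by
    have hlin : HasDerivAt (fun ρ : ℝ => 1 - ρ * r) (-r) ρ := by
      simpa using ((hasDerivAt_id ρ).mul_const r).const_sub 1
    refine ((hlin.inv (hne ρ hρ)).const_mul c).congr_deriv ?_
    ring
  have hcont : ContinuousOn (fun ρ : ℝ => c * r / (1 - ρ * r) ^ 2) (uIcc 0 1) :=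
    continuousOn_const.div (by fun_prop) fun ρ hρ => pow_ne_zero 2 (hne ρ hρ)
  rw [intervalIntegral.integral_eq_sub_of_hasDerivAt hderiv hcont.intervalIntegrable]
  have : 1 - r ≠ 0 := by linarith
  field_simp
  ring

lemma lintegral_ofReal_div_one_sub_mul_sq {c r : ℝ} (hc : 0 ≤ c) (hr0 : 0 ≤ r) (hr1 : r < 1) :
    ∫⁻ ρ in Ioo 0 1, ENNReal.ofReal (c * r / (1 - ρ * r) ^ 2)
      = ENNReal.ofReal (c * r / (1 - r)) := by
  have hcont : ContinuousOn (fun ρ : ℝ => c * r / (1 - ρ * r) ^ 2) (Icc 0 1) :=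
    continuousOn_const.div (by fun_prop) fun ρ hρ => pow_ne_zero 2 (by nlinarith [hρ.2])
  rw [← ofReal_integral_eq_lintegral_ofReal
      ((hcont.integrableOn_Icc).mono_set Ioo_subset_Icc_self)
      (.of_forall fun ρ => by positivity),
    ← integral_Ioc_eq_integral_Ioo, ← intervalIntegral.integral_of_le zero_le_one,
    integral_div_one_sub_mul_sq hr1]

lemma ae_norm_le_toReal_eLpNorm_top {α E : Type*} [MeasurableSpace α] [NormedAddCommGroup E]
    {μ : Measure α} {f : α → E} (hf : eLpNorm f ∞ μ ≠ ∞) :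
    ∀ᵐ x ∂μ, ‖f x‖ ≤ (eLpNorm f ∞ μ).toReal := by
  rw [eLpNorm_exponent_top] at hf ⊢
  filter_upwards [ae_le_eLpNormEssSup (f := f)] with x hx
  rw [← toReal_enorm (f x)]
  exact ENNReal.toReal_mono hf hx

section

variable {h : ℝ → ℂ} {M r : ℝ} {s : ℂ}

lemma hasDerivAt_cauchyKernel_sq {θ : ℝ} (hne : 1 - s * exp (-(θ : ℂ) * I) ≠ 0) :
    HasDerivAt (fun s => cauchyKernel s θ ^ 2)
      (2 * exp (-(θ : ℂ) * I) * cauchyKernel s θ ^ 3) s := by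
  have hlin : HasDerivAt (fun s : ℂ => 1 - s * exp (-(θ : ℂ) * I)) (-exp (-(θ : ℂ) * I)) s := by
    simpa using ((hasDerivAt_id s).mul_const (exp (-(θ : ℂ) * I))).const_sub 1
  refine ((hlin.inv hne).fun_pow 2).congr_deriv ?_
  simp only [cauchyKernel, Pi.inv_apply]
  generalize 1 - s * exp (-(θ : ℂ) * I) = u
  push_cast
  ring

lemma norm_cauchyKernel_pow_le {ρ : ℝ} (hsρ : ‖s‖ ≤ ρ) (hρ : ρ < 1) (θ : ℝ) (n : ℕ) :
    ‖cauchyKernel s θ ^ n‖ ≤ ((1 - ρ)⁻¹) ^ n := by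
  rw [norm_pow]
  gcongr
  exact (norm_cauchyKernel_le (hsρ.trans_lt hρ) θ).trans (by gcongr)

theorem hasDerivAt_integral_mul_cauchyKernel_sq {μ : Measure ℝ}
    (hh : Integrable h μ) (hs : ‖s‖ < 1) :
    HasDerivAt (fun s => ∫ θ, h θ * cauchyKernel s θ ^ 2 ∂μ)
      (∫ θ, h θ * (2 * exp (-(θ : ℂ) * I) * cauchyKernel s θ ^ 3) ∂μ) s := by
  set ρ := (1 + ‖s‖) / 2
  have hρ : ρ < 1 := by simp only [ρ]; linarith
  have hball : ∀ x ∈ ball s ((1 - ‖s‖) / 2), ‖x‖ ≤ ρ := fun x hx => by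
    have := norm_le_norm_add_norm_sub' x s
    rw [mem_ball, dist_eq_norm] at hx
    simp only [ρ]; linarith
  have hmeas : ∀ k : ℝ → ℂ, Continuous k → AEStronglyMeasurable (fun θ => h θ * k θ) μ :=
    fun k hk => hh.1.mul hk.aestronglyMeasurable
  have hnhds : ball s ((1 - ‖s‖) / 2) ∈ 𝓝 s := ball_mem_nhds s (by linarith)
  refine (hasDerivAt_integral_of_dominated_loc_of_deriv_le hnhds
    (F := fun x θ => h θ * cauchyKernel x θ ^ 2)
    (F' := fun x θ => h θ * (2 * exp (-(θ : ℂ) * I) * cauchyKernel x θ ^ 3))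
    (bound := fun θ => ‖h θ‖ * (2 * ((1 - ρ)⁻¹) ^ 3)) ?_ ?_ ?_ ?_ ?_ ?_).2
  · filter_upwards [hnhds] with x hx
    exact hmeas _ ((continuous_cauchyKernel ((hball x hx).trans_lt hρ)).pow 2)
  · exact hh.mul_bdd ((continuous_cauchyKernel hs).pow 2).aestronglyMeasurable
      (.of_forall fun θ => norm_cauchyKernel_pow_le le_rfl hs θ 2)
  · have := continuous_cauchyKernel hs
    exact hmeas _ (by fun_prop)
  · filter_upwards with θ x hx
    rw [norm_mul, norm_mul, norm_mul, norm_exp_neg_mul_I]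
    gcongr
    · norm_num
    · exact norm_cauchyKernel_pow_le (hball x hx) hρ θ 3
  · exact hh.norm.mul_const _
  · filter_upwards with θ x hx
    exact (hasDerivAt_cauchyKernel_sq
      (one_sub_mul_exp_ne_zero ((hball x hx).trans_lt hρ) θ)).const_mul (h θ)

theorem norm_setIntegral_mul_le_of_norm_le_cauchyKernel_sq {k : ℝ → ℂ} {C : ℝ}
    (hs : ‖s‖ < 1) (hM : ∀ᵐ θ ∂volume.restrict (Ioc (-π) π), ‖h θ‖ ≤ M)
    (hk : ∀ θ, ‖k θ‖ ≤ C * ‖cauchyKernel s θ‖ ^ 2) :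
    ‖∫ θ in Ioc (-π) π, h θ * k θ‖ ≤ M * C * (2 * π / (1 - ‖s‖ ^ 2)) := by
  have hint : IntegrableOn (fun θ => M * C * ‖cauchyKernel s θ‖ ^ 2) (Ioc (-π) π) :=
    (by have := continuous_cauchyKernel hs; fun_prop : Continuous _).integrableOn_Ioc
  refine (norm_integral_le_of_norm_le hint ?_).trans_eq ?_
  · filter_upwards [hM] with θ hθ
    rw [norm_mul, mul_assoc]
    exact mul_le_mul hθ (hk θ) (norm_nonneg _) ((norm_nonneg _).trans hθ)
  · rw [integral_const_mul, ← intervalIntegral.integral_of_le (by linarith [pi_pos]),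
      integral_norm_cauchyKernel_sq hs]

lemma div_one_sub_sq_le_div_one_sub {a x : ℝ} (ha : 0 ≤ a) (hx0 : 0 ≤ x) (hx1 : x < 1) :
    a / (1 - x ^ 2) ≤ a / (1 - x) :=
  div_le_div_of_nonneg_left ha (by linarith) (by nlinarith)

theorem norm_setIntegral_mul_cauchyKernel_sq_le (hs : ‖s‖ < 1)
    (hM : ∀ᵐ θ ∂volume.restrict (Ioc (-π) π), ‖h θ‖ ≤ M) (hM0 : 0 ≤ M) :
    ‖∫ θ in Ioc (-π) π, h θ * cauchyKernel s θ ^ 2‖ ≤ 2 * π * M / (1 - ‖s‖) := by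
  refine (norm_setIntegral_mul_le_of_norm_le_cauchyKernel_sq hs hM (C := 1)
    fun θ => by rw [norm_pow, one_mul]).trans ?_
  have := div_one_sub_sq_le_div_one_sub (a := 2 * π) (by positivity) (norm_nonneg s) hs
  calc M * 1 * (2 * π / (1 - ‖s‖ ^ 2)) ≤ M * (2 * π / (1 - ‖s‖)) := by
        rw [mul_one]; exact mul_le_mul_of_nonneg_left this hM0
    _ = 2 * π * M / (1 - ‖s‖) := by ring

theorem norm_setIntegral_mul_deriv_cauchyKernel_sq_le (hs : ‖s‖ < 1)
    (hM : ∀ᵐ θ ∂volume.restrict (Ioc (-π) π), ‖h θ‖ ≤ M) (hM0 : 0 ≤ M) :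
    ‖∫ θ in Ioc (-π) π, h θ * (2 * exp (-(θ : ℂ) * I) * cauchyKernel s θ ^ 3)‖
      ≤ 4 * π * M / (1 - ‖s‖) ^ 2 := by
  have hk : ∀ θ : ℝ, ‖2 * exp (-(θ : ℂ) * I) * cauchyKernel s θ ^ 3‖
      ≤ 2 * (1 - ‖s‖)⁻¹ * ‖cauchyKernel s θ‖ ^ 2 := fun θ => calc
    _ = 2 * ‖cauchyKernel s θ‖ * ‖cauchyKernel s θ‖ ^ 2 := by
      rw [norm_mul, norm_mul, norm_exp_neg_mul_I, norm_pow]; norm_num; ring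
    _ ≤ 2 * (1 - ‖s‖)⁻¹ * ‖cauchyKernel s θ‖ ^ 2 := by
      gcongr; exact norm_cauchyKernel_le hs θ
  refine (norm_setIntegral_mul_le_of_norm_le_cauchyKernel_sq hs hM hk).trans ?_
  have := div_one_sub_sq_le_div_one_sub (a := 2 * π) (by positivity) (norm_nonneg s) hs
  have hs' : 0 < 1 - ‖s‖ := sub_pos.mpr hs
  calc M * (2 * (1 - ‖s‖)⁻¹) * (2 * π / (1 - ‖s‖ ^ 2))
      ≤ M * (2 * (1 - ‖s‖)⁻¹) * (2 * π / (1 - ‖s‖)) := by gcongr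
    _ = 4 * π * M / (1 - ‖s‖) ^ 2 := by field_simp; ring

lemma norm_mul_ofReal_le (hr0 : 0 ≤ r) {w : ℂ} (hw : ‖w‖ < 1) : ‖w * r‖ ≤ r := by
  rw [norm_mul, Complex.norm_real, Real.norm_of_nonneg hr0]
  exact mul_le_of_le_one_left hr0 hw.le

theorem iSup_norm_setIntegral_mul_cauchyKernel_sq_le
    (hM : ∀ᵐ θ ∂volume.restrict (Ioc (-π) π), ‖h θ‖ ≤ M) (hM0 : 0 ≤ M)
    (hr0 : 0 ≤ r) (hr1 : r < 1) :
    ⨆ w ∈ ball (0 : ℂ) 1, (‖∫ θ in Ioc (-π) π, h θ * cauchyKernel (w * r) θ ^ 2‖₊ : ℝ≥0∞)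
      ≤ ENNReal.ofReal (2 * π * M / (1 - r)) := by
  refine iSup₂_le fun w hw => ?_
  have hwr := norm_mul_ofReal_le hr0 (mem_ball_zero_iff.mp hw)
  rw [← enorm_eq_nnnorm, ← ofReal_norm]
  refine ENNReal.ofReal_le_ofReal
    ((norm_setIntegral_mul_cauchyKernel_sq_le (hwr.trans_lt hr1) hM hM0).trans ?_)
  gcongr

theorem besovNorm0_setIntegral_mul_cauchyKernel_sq_le
    (hh : IntegrableOn h (Ioc (-π) π)) (hM : ∀ᵐ θ ∂volume.restrict (Ioc (-π) π), ‖h θ‖ ≤ M)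
    (hM0 : 0 ≤ M) (hr0 : 0 ≤ r) (hr1 : r < 1) :
    besovNorm0 (fun w => ∫ θ in Ioc (-π) π, h θ * cauchyKernel (w * r) θ ^ 2)
      ≤ ENNReal.ofReal (4 * π * M * r / (1 - r)) := by
  rw [← lintegral_ofReal_div_one_sub_mul_sq (by positivity) hr0 hr1]
  refine besovNorm0_le_of_norm_deriv_le fun z hz => ?_
  have hzr : ‖z * r‖ = ‖z‖ * r := by
    rw [norm_mul, Complex.norm_real, Real.norm_of_nonneg hr0]
  have hzr1 : ‖z * r‖ < 1 := (norm_mul_ofReal_le hr0 hz).trans_lt hr1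
  have hcomp := (hasDerivAt_integral_mul_cauchyKernel_sq hh hzr1).comp z
    (hasDerivAt_mul_const (r : ℂ))
  have hderiv :
      HasDerivAt (fun w : ℂ => ∫ θ in Ioc (-π) π, h θ * cauchyKernel (w * r) θ ^ 2) _ z := hcomp
  rw [hderiv.deriv, norm_mul, Complex.norm_real, Real.norm_of_nonneg hr0, ← hzr,
    mul_div_right_comm]
  exact mul_le_mul_of_nonneg_right (norm_setIntegral_mul_deriv_cauchyKernel_sq_le hzr1 hM hM0) hr0

end

/-- For `0 < r < 1` and essentially bounded `h` on `[−π,π]`, the function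
`G(w) = ∫_{−π}^{π} h(θ) (1 − w r e^{−iθ})^{−2} dθ` is holomorphic on `𝔻`, belongs to
`𝓑(𝔻)`, and `‖G‖_𝓑 ≤ 6π (1−r)^{−1} ‖h‖_{L^∞}`. -/
theorem G_mem_besov (r : ℝ) (hr0 : 0 < r) (hr1 : r < 1) (h : ℝ → ℂ)
    (hmeas : AEStronglyMeasurable h (volume.restrict (Set.Ioo (-Real.pi) Real.pi)))
    (hbdd : eLpNorm h ⊤ (volume.restrict (Set.Ioo (-Real.pi) Real.pi)) < ⊤)
    (G : ℂ → ℂ)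
    (hG : ∀ w : ℂ, G w = ∫ θ in (-Real.pi)..Real.pi,
      h θ * ((1 - w * (r : ℂ) * Complex.exp (-(θ : ℂ) * Complex.I)) ^ 2)⁻¹) :
    (∀ w ∈ ball (0:ℂ) 1, DifferentiableAt ℂ G w) ∧
    (⨆ w ∈ ball (0:ℂ) 1, (‖G w‖₊ : ℝ≥0∞)) + besovNorm0 G
      ≤ ENNReal.ofReal (6 * Real.pi / (1 - r)) *
          eLpNorm h ⊤ (volume.restrict (Set.Ioo (-Real.pi) Real.pi)) := by
  rw [Measure.restrict_congr_set Ioo_ae_eq_Ioc] at hmeas hbdd ⊢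
  obtain rfl : G = fun w => ∫ θ in Ioc (-π) π, h θ * cauchyKernel (w * r) θ ^ 2 :=
    funext fun w => by
      simp only [hG, intervalIntegral.integral_of_le (neg_le_self pi_pos.le), cauchyKernel,
        inv_pow]
  set M := (eLpNorm h ⊤ (volume.restrict (Ioc (-π) π))).toReal
  have hM := ae_norm_le_toReal_eLpNorm_top hbdd.ne
  have hM0 : 0 ≤ M := ENNReal.toReal_nonneg
  have hint : IntegrableOn h (Ioc (-π) π) := MemLp.integrable le_top ⟨hmeas, hbdd⟩
  refine ⟨fun w hw => ?_, ?_⟩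
  · have hwr := (norm_mul_ofReal_le hr0.le (mem_ball_zero_iff.mp hw)).trans_lt hr1
    exact ((hasDerivAt_integral_mul_cauchyKernel_sq hint hwr).comp w
      (hasDerivAt_mul_const (r : ℂ))).differentiableAt
  calc _ ≤ ENNReal.ofReal (2 * π * M / (1 - r)) + ENNReal.ofReal (4 * π * M * r / (1 - r)) :=
        add_le_add (iSup_norm_setIntegral_mul_cauchyKernel_sq_le hM hM0 hr0.le hr1)
          (besovNorm0_setIntegral_mul_cauchyKernel_sq_le hint hM hM0 hr0.le hr1)
    _ ≤ ENNReal.ofReal (6 * π / (1 - r) * M) := by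
        have : 0 < 1 - r := by linarith
        rw [← ENNReal.ofReal_add (by positivity) (by positivity), ← add_div,
          div_mul_eq_mul_div]
        gcongr
        nlinarith [mul_nonneg pi_pos.le hM0]
    _ = _ := by rw [ENNReal.ofReal_mul (by positivity), ENNReal.ofReal_toReal hbdd.ne]
end

section
/- Let g : 𝔻 → ℂ be continuous with ‖g‖_𝒲 := ∫₀¹ sup_{|θ|≤π} |g(r e^{iθ})| dr < ∞, and define (Qg)(w) := (2/π) ∫_𝔻 log(1/|z|) · w g(z) (1 − w·conj(z))^{−2} dA(z) for w ∈ 𝔻 (the integral is absolutely convergent). Then Qg is holomorphic on 𝔻, Qg ∈ 𝓑(𝔻), and ‖Qg‖_𝓑 ≤ 16 ‖g‖_𝒲. -/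
open MeasureTheory Metric
open scoped ENNReal

/-- The norm `‖g‖_𝒲 = ∫₀¹ sup_{|θ|≤π} |g(r e^{iθ})| dr` on `𝒲(𝔻)`. -/
noncomputable def wNorm (g : ℂ → ℂ) : ℝ≥0∞ :=
  ∫⁻ r in Set.Ioo (0:ℝ) 1,
    ⨆ θ ∈ Set.Icc (-Real.pi) Real.pi,
      (‖g ((r : ℂ) * Complex.exp ((θ : ℂ) * Complex.I))‖₊ : ℝ≥0∞)

/-!
Write `z = r e^{iθ}` and let `M(r) = sup_θ |g(r e^{iθ})|`, so that `‖g‖_𝒲 = ∫₀¹ M`.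
Since `|1 - w z̄| = |e^{iθ} - r w|`, the Poisson formula for the constant function gives
`∫_{-π}^{π} |1 - w z̄|⁻² dθ = 2π / (1 - r²|w|²)`. Together with `r log(1/r) ≤ 1 - r` this yields
`|Qg(w)| ≤ 4 ∫₀¹ M`. The same kernel bound applied to
`(Qg)'(w) = (2/π) ∫_𝔻 log(1/|z|) g(z) (1 + w z̄) (1 - w z̄)⁻³ dA(z)` gives
`|(Qg)'(s e^{iθ})| ≤ 4 ∫₀¹ M(r) r log(1/r) (1 - s r)⁻² dr`, and integrating in `s` first, using
`∫₀¹ (1 - s r)⁻² ds = (1 - r)⁻¹`, gives `‖Qg‖_{𝓑₀} ≤ 4 ∫₀¹ M`.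
The exchange of the `r`- and `s`-integrals needs `M` to be measurable: after extending `g` by `0`
outside the disc, `M` is a supremum of lower semicontinuous functions.
-/

open Set ComplexConjugate
open scoped Real

theorem integral_inv_norm_circleMap_sub_sq {c : ℂ} (hc : ‖c‖ < 1) :
    ∫ θ in -π..π, (‖circleMap 0 1 θ - c‖ ^ 2)⁻¹ = 2 * π / (1 - ‖c‖ ^ 2) := by
  -- the Poisson integral formula for the constant function `1`, over the period `[-π, π]`
  have hP := (diffContOnCl_const (c := (1:ℂ))).circleAverage_poissonKernel_smul'
    (c := 0) (R := 1) (w := c) (by simpa using hc)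
  rw [Real.circleAverage_eq_integral_add (-π), intervalIntegral.integral_comp_add_right
    (fun θ => ((‖circleMap 0 1 θ - 0‖ ^ 2 - ‖c - 0‖ ^ 2) /
      ‖circleMap 0 1 θ - 0 - (c - 0)‖ ^ 2) • (1:ℂ))] at hP
  simp only [sub_zero, norm_circleMap_zero, abs_one, one_pow, zero_add, Complex.real_smul, mul_one,
    intervalIntegral.integral_ofReal, ← Complex.ofReal_mul, Complex.ofReal_eq_one, div_eq_mul_inv,
    intervalIntegral.integral_const_mul] at hP
  rw [show 2 * π + -π = π by ring] at hP
  have hc2 : 0 < 1 - ‖c‖ ^ 2 := by nlinarith [norm_nonneg c]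
  field_simp at hP ⊢
  linarith

theorem lintegral_inv_norm_circleMap_sub_sq {c : ℂ} (hc : ‖c‖ < 1) :
    ∫⁻ θ in Ioo (-π) π, ENNReal.ofReal (‖circleMap 0 1 θ - c‖ ^ 2)⁻¹ =
      ENNReal.ofReal (2 * π / (1 - ‖c‖ ^ 2)) := by
  have hcont : Continuous fun θ => (‖circleMap 0 1 θ - c‖ ^ 2)⁻¹ := by
    refine ((continuous_circleMap 0 1).sub continuous_const).norm.pow 2 |>.inv₀ fun θ => ?_
    refine pow_ne_zero 2 (norm_ne_zero_iff.2 (sub_ne_zero.2 fun h => ?_))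
    simp [← h] at hc
  rw [← ofReal_integral_eq_lintegral_ofReal (hcont.integrableOn_Icc.mono_set Ioo_subset_Icc_self)
    (.of_forall fun θ => by positivity), ← integral_Ioc_eq_integral_Ioo,
    ← intervalIntegral.integral_of_le (by linarith [Real.pi_pos]),
    integral_inv_norm_circleMap_sub_sq hc]

theorem norm_one_sub_mul_conj_circleMap (w : ℂ) (r θ : ℝ) :
    ‖1 - w * conj (circleMap 0 r θ)‖ = ‖circleMap 0 1 θ - r * w‖ := by
  have h : circleMap 0 1 θ * (1 - w * conj (circleMap 0 r θ)) = circleMap 0 1 θ - r * w := by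
    rw [conj_circleMap_zero, mul_sub, mul_one, ← mul_assoc, mul_comm _ w, mul_assoc,
      circleMap_zero_mul]
    simp [circleMap_zero, mul_comm]
  rw [← h, norm_mul, norm_circleMap_zero, abs_one, one_mul]

theorem lintegral_inv_norm_one_sub_mul_conj_sq {w : ℂ} (hw : ‖w‖ < 1) {r : ℝ} (hr : r ∈ Icc 0 1) :
    ∫⁻ θ in Ioo (-π) π, ENNReal.ofReal (‖1 - w * conj (circleMap 0 r θ)‖ ^ 2)⁻¹ =
      ENNReal.ofReal (2 * π / (1 - (‖w‖ * r) ^ 2)) := by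
  have hrw : ‖(r : ℂ) * w‖ = ‖w‖ * r := by
    rw [norm_mul, Complex.norm_real, Real.norm_of_nonneg hr.1, mul_comm]
  have hrw1 : ‖(r : ℂ) * w‖ < 1 := by
    rw [hrw]
    nlinarith [norm_nonneg w, hr.1, hr.2]
  simp_rw [norm_one_sub_mul_conj_circleMap]
  rw [lintegral_inv_norm_circleMap_sub_sq hrw1, hrw]

noncomputable def maxModulus (g : ℂ → ℂ) (r : ℝ) : ℝ≥0∞ :=
  ⨆ θ ∈ Icc (-π) π, ‖g (circleMap 0 r θ)‖ₑ

theorem wNorm_eq_lintegral_maxModulus (g : ℂ → ℂ) :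
    wNorm g = ∫⁻ r in Ioo 0 1, maxModulus g r := by
  simp only [wNorm, maxModulus, circleMap_zero, enorm_eq_nnnorm]

theorem besovNorm0_eq_wNorm_deriv (f : ℂ → ℂ) : besovNorm0 f = wNorm (deriv f) := rfl

theorem enorm_le_maxModulus (g : ℂ → ℂ) (r : ℝ) {θ : ℝ} (hθ : θ ∈ Icc (-π) π) :
    ‖g (circleMap 0 r θ)‖ₑ ≤ maxModulus g r :=
  le_iSup₂ (f := fun θ _ => ‖g (circleMap 0 r θ)‖ₑ) θ hθ

theorem circleMap_mem_ball {r : ℝ} (hr : r ∈ Ioo 0 1) (θ : ℝ) : circleMap 0 r θ ∈ ball 0 1 := by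
  simpa [abs_of_pos hr.1] using hr.2

theorem lowerSemicontinuous_maxModulus_indicator {g : ℂ → ℂ} (hgc : ContinuousOn g (ball 0 1)) :
    LowerSemicontinuous (maxModulus ((ball 0 1).indicator g)) := by
  refine lowerSemicontinuous_biSup fun θ _ r => ?_
  by_cases hr : circleMap 0 r θ ∈ ball 0 1
  · have hcont : ContinuousOn ((ball (0:ℂ) 1).indicator g) (ball 0 1) :=
      hgc.congr fun z hz => indicator_of_mem hz g
    have hcirc : Continuous (circleMap 0 · θ) := by fun_prop [circleMap]
    exact ((hcont.continuousAt (isOpen_ball.mem_nhds hr)).comp (f := (circleMap 0 · θ))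
      hcirc.continuousAt).enorm.lowerSemicontinuousAt
  · intro y hy
    simp [indicator_of_notMem hr] at hy

theorem aemeasurable_maxModulus {g : ℂ → ℂ} (hgc : ContinuousOn g (ball 0 1)) :
    AEMeasurable (maxModulus g) (volume.restrict (Ioo 0 1)) := by
  refine (lowerSemicontinuous_maxModulus_indicator hgc).measurable.aemeasurable.congr ?_
  filter_upwards [ae_restrict_mem measurableSet_Ioo] with r hr
  simp only [maxModulus, indicator_of_mem (circleMap_mem_ball hr _)]

theorem lintegral_ball_le_lintegral_polar (f : ℂ → ℝ≥0∞) :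
    ∫⁻ z in ball 0 1, f z ≤
      ∫⁻ r in Ioo 0 1, ENNReal.ofReal r * ∫⁻ θ in Ioo (-π) π, f (circleMap 0 r θ) := by
  have hsymm (p : ℝ × ℝ) : Complex.polarCoord.symm p = circleMap 0 p.1 p.2 := by
    simp [circleMap_zero, Complex.exp_mul_I, ← Complex.ofReal_cos, ← Complex.ofReal_sin]
  have hinner : ∀ r ∈ Ioi (0:ℝ), ∫⁻ θ in Ioo (-π) π,
      ENNReal.ofReal r • (ball 0 1).indicator f (Complex.polarCoord.symm (r, θ)) =
      (Ioo 0 1).indicator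
        (fun r => ENNReal.ofReal r * ∫⁻ θ in Ioo (-π) π, f (circleMap 0 r θ)) r := by
    intro r hr
    by_cases hr1 : r < 1
    · simp_rw [indicator_of_mem (show r ∈ Ioo 0 1 from ⟨hr, hr1⟩), hsymm,
        indicator_of_mem (circleMap_mem_ball ⟨hr, hr1⟩ _), smul_eq_mul]
      exact lintegral_const_mul' _ _ ENNReal.ofReal_ne_top
    · have hout (θ : ℝ) : circleMap 0 r θ ∉ ball (0:ℂ) 1 := by
        simpa [abs_of_pos (mem_Ioi.1 hr)] using hr1
      simp [hsymm, hout, indicator_of_notMem (fun h : r ∈ Ioo 0 1 => hr1 h.2)]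
  calc ∫⁻ z in ball 0 1, f z = ∫⁻ z, (ball 0 1).indicator f z :=
        (lintegral_indicator measurableSet_ball f).symm
    _ = ∫⁻ p in Ioi 0 ×ˢ Ioo (-π) π,
          ENNReal.ofReal p.1 • (ball 0 1).indicator f (Complex.polarCoord.symm p) :=
        (Complex.lintegral_comp_polarCoord_symm _).symm
    _ ≤ ∫⁻ r in Ioi 0, ∫⁻ θ in Ioo (-π) π,
          ENNReal.ofReal r • (ball 0 1).indicator f (Complex.polarCoord.symm (r, θ)) := by
        -- Tonelli as an inequality, which needs no measurability of `f`
        rw [Measure.volume_eq_prod, ← Measure.prod_restrict]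
        exact lintegral_prod_le _
    _ = ∫⁻ r in Ioo 0 1, ENNReal.ofReal r * ∫⁻ θ in Ioo (-π) π, f (circleMap 0 r θ) := by
        rw [setLIntegral_congr_fun measurableSet_Ioi hinner, lintegral_indicator measurableSet_Ioo,
          Measure.restrict_restrict measurableSet_Ioo, Ioo_inter_Ioi, max_self]

theorem lintegral_ball_le_lintegral_maxModulus {g : ℂ → ℂ} {u K : ℂ → ℝ≥0∞} (hK : Measurable K)
    (hu : ∀ z ∈ ball (0:ℂ) 1, u z ≤ ‖g z‖ₑ * K z) :
    ∫⁻ z in ball 0 1, u z ≤ ∫⁻ r in Ioo 0 1,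
      maxModulus g r * (ENNReal.ofReal r * ∫⁻ θ in Ioo (-π) π, K (circleMap 0 r θ)) := by
  refine (lintegral_ball_le_lintegral_polar u).trans
    (setLIntegral_mono' measurableSet_Ioo fun r hr => ?_)
  have hKr : Measurable fun θ => K (circleMap 0 r θ) :=
    hK.comp (continuous_circleMap 0 r).measurable
  calc ENNReal.ofReal r * ∫⁻ θ in Ioo (-π) π, u (circleMap 0 r θ)
      ≤ ENNReal.ofReal r * ∫⁻ θ in Ioo (-π) π, maxModulus g r * K (circleMap 0 r θ) := by
        gcongr ENNReal.ofReal r * ?_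
        refine setLIntegral_mono' measurableSet_Ioo fun θ hθ => ?_
        exact (hu _ (circleMap_mem_ball hr θ)).trans
          (mul_le_mul_left (enorm_le_maxModulus g r (Ioo_subset_Icc_self hθ)) _)
    _ = _ := by rw [lintegral_const_mul _ hKr, mul_left_comm]

theorem Real.log_one_div_nonneg {x : ℝ} (h0 : 0 ≤ x) (h1 : x ≤ 1) : 0 ≤ Real.log (1 / x) := by
  rw [one_div, Real.log_inv, neg_nonneg]
  exact Real.log_nonpos h0 h1

theorem Real.mul_log_one_div_le {r : ℝ} (hr : 0 < r) : r * Real.log (1 / r) ≤ 1 - r := by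
  have h := mul_le_mul_of_nonneg_left (Real.log_le_sub_one_of_pos (one_div_pos.2 hr)) hr.le
  rwa [mul_sub, mul_one_div_cancel hr.ne', mul_one] at h

theorem one_sub_le_norm_one_sub_mul_conj (w z : ℂ) : 1 - ‖w‖ * ‖z‖ ≤ ‖1 - w * conj z‖ := by
  have := norm_sub_norm_le (1 : ℂ) (w * conj z)
  rwa [norm_one, norm_mul, Complex.norm_conj] at this

theorem norm_one_add_mul_conj_le (w z : ℂ) : ‖1 + w * conj z‖ ≤ 1 + ‖w‖ * ‖z‖ := by
  have := norm_add_le (1 : ℂ) (w * conj z)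
  rwa [norm_one, norm_mul, Complex.norm_conj] at this

theorem lintegral_ball_le_lintegral_maxModulus_poisson {g : ℂ → ℂ} {w : ℂ} (hw : ‖w‖ < 1)
    {A : ℝ → ℝ} (hA : Measurable A) (hA0 : ∀ r ∈ Ioo (0:ℝ) 1, 0 ≤ A r) {u : ℂ → ℝ≥0∞}
    (hu : ∀ z ∈ ball (0:ℂ) 1, u z ≤
      ‖g z‖ₑ * (ENNReal.ofReal (A ‖z‖) * ENNReal.ofReal (‖1 - w * conj z‖ ^ 2)⁻¹)) :
    ∫⁻ z in ball 0 1, u z ≤ ∫⁻ r in Ioo 0 1,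
      maxModulus g r * ENNReal.ofReal (r * A r * (2 * π / (1 - (‖w‖ * r) ^ 2))) := by
  refine (lintegral_ball_le_lintegral_maxModulus (by fun_prop) hu).trans_eq
    (setLIntegral_congr_fun measurableSet_Ioo fun r hr => ?_)
  simp_rw [norm_circleMap_zero, abs_of_pos hr.1]
  rw [lintegral_const_mul _ (by fun_prop),
    lintegral_inv_norm_one_sub_mul_conj_sq hw (Ioo_subset_Icc_self hr),
    ← ENNReal.ofReal_mul (hA0 r hr), ← ENNReal.ofReal_mul hr.1.le, mul_assoc r]

theorem lintegral_ball_log_mul_le (g : ℂ → ℂ) :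
    ∫⁻ z in ball 0 1, ENNReal.ofReal (Real.log (1 / ‖z‖)) * ‖g z‖ₑ ≤
      ENNReal.ofReal (2 * π) * wNorm g := by
  refine (lintegral_ball_le_lintegral_maxModulus (g := g)
    (K := fun z => ENNReal.ofReal (Real.log (1 / ‖z‖))) (by fun_prop)
    fun z _ => (mul_comm _ _).le).trans ?_
  rw [wNorm_eq_lintegral_maxModulus, ← lintegral_const_mul' _ _ ENNReal.ofReal_ne_top]
  refine setLIntegral_mono' measurableSet_Ioo fun r hr => ?_
  simp_rw [norm_circleMap_zero, abs_of_pos hr.1]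
  rw [setLIntegral_const, Real.volume_Ioo, mul_comm (ENNReal.ofReal (2 * π)),
    ← ENNReal.ofReal_mul (Real.log_one_div_nonneg hr.1.le hr.2.le),
    ← ENNReal.ofReal_mul hr.1.le]
  gcongr maxModulus g r * ENNReal.ofReal ?_
  nlinarith [Real.mul_log_one_div_le hr.1, Real.pi_pos, hr.1]

theorem integrableOn_log_mul {g : ℂ → ℂ} (hgc : ContinuousOn g (ball 0 1)) (hgW : wNorm g < ⊤) :
    IntegrableOn (fun z => (Real.log (1 / ‖z‖) : ℂ) * g z) (ball 0 1) := by
  refine ⟨(by fun_prop : Measurable fun z : ℂ => (Real.log (1 / ‖z‖) : ℂ)).aestronglyMeasurable.mul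
    (hgc.aestronglyMeasurable measurableSet_ball), ?_⟩
  refine ((setLIntegral_mono' measurableSet_ball fun z hz => ?_).trans
    (lintegral_ball_log_mul_le g)).trans_lt (ENNReal.mul_lt_top ENNReal.ofReal_lt_top hgW)
  rw [enorm_mul, ← ofReal_norm, Complex.norm_real,
    Real.norm_of_nonneg (Real.log_one_div_nonneg (norm_nonneg z) (mem_ball_zero_iff.1 hz).le)]

theorem enorm_integral_ball_kernel_le_wNorm (g : ℂ → ℂ) {w : ℂ} (hw : ‖w‖ < 1) :
    ‖∫ z in ball (0:ℂ) 1, (Real.log (1 / ‖z‖) : ℂ) * g z * (w * ((1 - w * conj z) ^ 2)⁻¹)‖ₑ ≤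
      ENNReal.ofReal (2 * π) * wNorm g := by
  refine (enorm_integral_le_lintegral_enorm _).trans <|
    (lintegral_ball_le_lintegral_maxModulus_poisson hw (g := g)
      (A := fun r => Real.log (1 / r) * ‖w‖) (by fun_prop) (fun r hr => ?_) fun z hz => ?_).trans ?_
  · exact mul_nonneg (Real.log_one_div_nonneg hr.1.le hr.2.le) (norm_nonneg w)
  · have hlog := Real.log_one_div_nonneg (norm_nonneg z) (mem_ball_zero_iff.1 hz).le
    rw [← ofReal_norm, ← ofReal_norm, ← ENNReal.ofReal_mul (by positivity),
      ← ENNReal.ofReal_mul (norm_nonneg _)]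
    refine ENNReal.ofReal_le_ofReal (le_of_eq ?_)
    simp only [norm_mul, norm_inv, norm_pow, Complex.norm_real, Real.norm_of_nonneg hlog]
    ring
  · rw [wNorm_eq_lintegral_maxModulus, ← lintegral_const_mul' _ _ ENNReal.ofReal_ne_top]
    refine setLIntegral_mono' measurableSet_Ioo fun r hr => ?_
    rw [mul_comm (ENNReal.ofReal _)]
    gcongr maxModulus g r * ENNReal.ofReal ?_
    have hwr : ‖w‖ * r ≤ r := mul_le_of_le_one_left hr.1.le hw.le
    have hsr : (‖w‖ * r) ^ 2 ≤ r := by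
      have := pow_le_of_le_one (mul_nonneg (norm_nonneg w) hr.1.le) (hwr.trans hr.2.le)
        two_ne_zero
      exact this.trans hwr
    have hpos : 0 < 1 - (‖w‖ * r) ^ 2 := by linarith [hr.2]
    have hrlog := Real.mul_log_one_div_le hr.1
    calc r * (Real.log (1 / r) * ‖w‖) * (2 * π / (1 - (‖w‖ * r) ^ 2))
        ≤ (1 - (‖w‖ * r) ^ 2) * 1 * (2 * π / (1 - (‖w‖ * r) ^ 2)) := by
          rw [← mul_assoc]
          gcongr
          linarith
      _ = 2 * π := by rw [mul_one]; exact mul_div_cancel₀ _ hpos.ne'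

theorem enorm_integral_ball_kernel_deriv_le (g : ℂ → ℂ) {w : ℂ} (hw : ‖w‖ < 1) :
    ‖∫ z in ball (0:ℂ) 1, (Real.log (1 / ‖z‖) : ℂ) * g z *
        ((1 + w * conj z) * ((1 - w * conj z) ^ 3)⁻¹)‖ₑ ≤
      ∫⁻ r in Ioo 0 1, maxModulus g r *
        ENNReal.ofReal (2 * π * (r * Real.log (1 / r)) * ((1 - ‖w‖ * r) ^ 2)⁻¹) := by
  have hwr {r : ℝ} (hr : r ∈ Icc (0:ℝ) 1) : ‖w‖ * r < 1 := by nlinarith [norm_nonneg w, hr.1, hr.2]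
  refine (enorm_integral_le_lintegral_enorm _).trans <|
    (lintegral_ball_le_lintegral_maxModulus_poisson hw (g := g)
      (A := fun r => Real.log (1 / r) * ((1 + ‖w‖ * r) / (1 - ‖w‖ * r))) (by fun_prop)
      (fun r hr => ?_) fun z hz => ?_).trans_eq
    (setLIntegral_congr_fun measurableSet_Ioo fun r hr => ?_)
  · have ht := hwr (Ioo_subset_Icc_self hr)
    have ht0 : 0 ≤ ‖w‖ * r := mul_nonneg (norm_nonneg w) hr.1.le
    exact mul_nonneg (Real.log_one_div_nonneg hr.1.le hr.2.le)
      (div_nonneg (by linarith) (by linarith))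
  · have hz1 : ‖z‖ ≤ 1 := (mem_ball_zero_iff.1 hz).le
    have hlog := Real.log_one_div_nonneg (norm_nonneg z) hz1
    have ht := hwr ⟨norm_nonneg z, hz1⟩
    have ht0 : 0 ≤ ‖w‖ * ‖z‖ := by positivity
    have hlow := one_sub_le_norm_one_sub_mul_conj w z
    have hup := norm_one_add_mul_conj_le w z
    have hpos : 0 < ‖1 - w * conj z‖ := by linarith
    have hkey : ‖1 + w * conj z‖ * (‖1 - w * conj z‖ ^ 3)⁻¹ ≤
        (1 + ‖w‖ * ‖z‖) / (1 - ‖w‖ * ‖z‖) * (‖1 - w * conj z‖ ^ 2)⁻¹ :=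
      calc ‖1 + w * conj z‖ * (‖1 - w * conj z‖ ^ 3)⁻¹
          = ‖1 + w * conj z‖ / ‖1 - w * conj z‖ * (‖1 - w * conj z‖ ^ 2)⁻¹ := by
            field_simp
        _ ≤ _ := by gcongr
    rw [← ofReal_norm, ← ofReal_norm, ← ENNReal.ofReal_mul (by positivity),
      ← ENNReal.ofReal_mul (norm_nonneg _)]
    apply ENNReal.ofReal_le_ofReal
    simp only [norm_mul, norm_inv, norm_pow, Complex.norm_real, Real.norm_of_nonneg hlog]
    calc Real.log (1 / ‖z‖) * ‖g z‖ * (‖1 + w * conj z‖ * (‖1 - w * conj z‖ ^ 3)⁻¹)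
        ≤ Real.log (1 / ‖z‖) * ‖g z‖ *
            ((1 + ‖w‖ * ‖z‖) / (1 - ‖w‖ * ‖z‖) * (‖1 - w * conj z‖ ^ 2)⁻¹) := by gcongr
      _ = _ := by ring
  · have ht := hwr (Ioo_subset_Icc_self hr)
    have ht0 : 0 ≤ ‖w‖ * r := mul_nonneg (norm_nonneg w) hr.1.le
    generalize ‖w‖ * r = t at ht ht0 ⊢
    have h1 : 1 - t ≠ 0 := by linarith
    have h2 : 1 + t ≠ 0 := by linarith
    rw [show 1 - t ^ 2 = (1 - t) * (1 + t) by ring]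
    congr 2
    field_simp

theorem lintegral_inv_one_sub_mul_sq {r : ℝ} (hr : r ∈ Ioo (0:ℝ) 1) :
    ∫⁻ s in Ioo 0 1, ENNReal.ofReal ((1 - s * r) ^ 2)⁻¹ = ENNReal.ofReal (1 - r)⁻¹ := by
  have hne : ∀ s ∈ Icc (0:ℝ) 1, 1 - s * r ≠ 0 := fun s hs => by nlinarith [hs.2, hr.1, hr.2]
  have hderiv : ∀ s ∈ uIcc (0:ℝ) 1,
      HasDerivAt (fun s => r⁻¹ * (1 - s * r)⁻¹) ((1 - s * r) ^ 2)⁻¹ s := fun s hs => by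
    rw [uIcc_of_le zero_le_one] at hs
    refine (((((hasDerivAt_id' s).mul_const r).const_sub 1).fun_inv (hne s hs)).const_mul
      r⁻¹).congr_deriv ?_
    field_simp [hr.1.ne']
  have hcont : ContinuousOn (fun s => ((1 - s * r) ^ 2)⁻¹) (Icc (0:ℝ) 1) :=
    ContinuousOn.inv₀ (by fun_prop) fun s hs => pow_ne_zero 2 (hne s hs)
  have hr1 : 1 - r ≠ 0 := by linarith [hr.2]
  rw [← ofReal_integral_eq_lintegral_ofReal (hcont.integrableOn_Icc.mono_set Ioo_subset_Icc_self)
      (.of_forall fun s => by positivity), ← integral_Ioc_eq_integral_Ioo,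
    ← intervalIntegral.integral_of_le zero_le_one, intervalIntegral.integral_eq_sub_of_hasDerivAt
      hderiv ((uIcc_of_le (zero_le_one' ℝ)).symm ▸ hcont).intervalIntegrable]
  congr 1
  field_simp [hr.1.ne']
  ring

theorem lintegral_lintegral_mul_log_div_sq_le {M : ℝ → ℝ≥0∞}
    (hM : AEMeasurable M (volume.restrict (Ioo 0 1))) :
    ∫⁻ s in Ioo 0 1, ∫⁻ r in Ioo 0 1,
        M r * ENNReal.ofReal (2 * π * (r * Real.log (1 / r)) * ((1 - s * r) ^ 2)⁻¹) ≤
      ENNReal.ofReal (2 * π) * ∫⁻ r in Ioo 0 1, M r := by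
  rw [lintegral_lintegral_swap (hM.comp_snd.mul (by fun_prop)),
    ← lintegral_const_mul' _ _ ENNReal.ofReal_ne_top]
  refine setLIntegral_mono' measurableSet_Ioo fun r hr => ?_
  have hc : 0 ≤ 2 * π * (r * Real.log (1 / r)) :=
    mul_nonneg (by positivity) (mul_nonneg hr.1.le (Real.log_one_div_nonneg hr.1.le hr.2.le))
  simp_rw [ENNReal.ofReal_mul hc]
  rw [lintegral_const_mul _ (by fun_prop), lintegral_const_mul _ (by fun_prop),
    lintegral_inv_one_sub_mul_sq hr, mul_comm (ENNReal.ofReal (2 * π)),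
    ← ENNReal.ofReal_mul hc]
  gcongr M r * ENNReal.ofReal ?_
  rw [mul_inv_le_iff₀ (by linarith [hr.2])]
  gcongr
  exact Real.mul_log_one_div_le hr.1

theorem besovNorm0_le_of_enorm_deriv_le {f : ℂ → ℂ} {M : ℝ → ℝ≥0∞}
    (hM : AEMeasurable M (volume.restrict (Ioo 0 1))) {C : ℝ≥0∞} (hC : C ≠ ⊤)
    (hf : ∀ w ∈ ball (0:ℂ) 1, ‖deriv f w‖ₑ ≤ C * ∫⁻ r in Ioo 0 1,
      M r * ENNReal.ofReal (2 * π * (r * Real.log (1 / r)) * ((1 - ‖w‖ * r) ^ 2)⁻¹)) :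
    besovNorm0 f ≤ C * (ENNReal.ofReal (2 * π) * ∫⁻ r in Ioo 0 1, M r) := by
  refine le_trans ?_ (mul_le_mul_right (lintegral_lintegral_mul_log_div_sq_le hM) _)
  rw [besovNorm0_eq_wNorm_deriv, wNorm_eq_lintegral_maxModulus]
  refine (setLIntegral_mono' measurableSet_Ioo fun s hs => iSup₂_le fun θ _ => ?_).trans
    (lintegral_const_mul' _ _ hC).le
  simpa [abs_of_pos hs.1] using hf _ (circleMap_mem_ball hs θ)

theorem hasDerivAt_mul_inv_one_sub_mul_sq {c w : ℂ} (h : 1 - w * c ≠ 0) :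
    HasDerivAt (fun w => w * ((1 - w * c) ^ 2)⁻¹) ((1 + w * c) * ((1 - w * c) ^ 3)⁻¹) w := by
  refine ((hasDerivAt_id' w).mul ((((hasDerivAt_id' w).mul_const c).const_sub 1).fun_pow 2
    |>.fun_inv (pow_ne_zero 2 h))).congr_deriv ?_
  field_simp
  ring

theorem hasDerivAt_integral_ball_mul_kernel {h : ℂ → ℂ} (hh : IntegrableOn h (ball 0 1))
    {w₀ : ℂ} (hw₀ : ‖w₀‖ < 1) :
    HasDerivAt (fun w => ∫ z in ball (0:ℂ) 1, h z * (w * ((1 - w * conj z) ^ 2)⁻¹))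
      (∫ z in ball (0:ℂ) 1, h z * ((1 + w₀ * conj z) * ((1 - w₀ * conj z) ^ 3)⁻¹)) w₀ := by
  obtain ⟨ρ, hw₀ρ, hρ1⟩ := exists_between hw₀
  have hρ : 0 < 1 - ρ := by linarith
  have hlow : ∀ z ∈ ball (0:ℂ) 1, ∀ w ∈ ball (0:ℂ) ρ, 1 - ρ ≤ ‖1 - w * conj z‖ := by
    intro z hz w hw
    rw [mem_ball_zero_iff] at hz hw
    nlinarith [one_sub_le_norm_one_sub_mul_conj w z, norm_nonneg w, norm_nonneg z]
  have hmeas : ∀ w : ℂ, AEStronglyMeasurable (fun z => h z * (w * ((1 - w * conj z) ^ 2)⁻¹))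
      (volume.restrict (ball 0 1)) := fun w =>
    hh.aestronglyMeasurable.mul (by fun_prop : Measurable _).aestronglyMeasurable
  refine (hasDerivAt_integral_of_dominated_loc_of_deriv_le (s := ball 0 ρ)
    (F' := fun w z => h z * ((1 + w * conj z) * ((1 - w * conj z) ^ 3)⁻¹))
    (bound := fun z => 2 / (1 - ρ) ^ 3 * ‖h z‖)
    (isOpen_ball.mem_nhds (mem_ball_zero_iff.2 hw₀ρ)) (.of_forall hmeas) ?_
    (hh.aestronglyMeasurable.mul (by fun_prop : Measurable fun z : ℂ =>
      (1 + w₀ * conj z) * ((1 - w₀ * conj z) ^ 3)⁻¹).aestronglyMeasurable) ?_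
    (hh.norm.const_mul _) ?_).2
  · refine hh.mul_bdd (c := ((1 - ρ) ^ 2)⁻¹) (by fun_prop : Measurable _).aestronglyMeasurable ?_
    filter_upwards [ae_restrict_mem measurableSet_ball] with z hz
    have := hlow z hz w₀ (mem_ball_zero_iff.2 hw₀ρ)
    rw [norm_mul, norm_inv, norm_pow, ← div_eq_mul_inv, ← one_div]
    gcongr
  · filter_upwards [ae_restrict_mem measurableSet_ball] with z hz w hw
    have := hlow z hz w hw
    have hup : ‖1 + w * conj z‖ ≤ 2 := by
      rw [mem_ball_zero_iff] at hz hw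
      nlinarith [norm_one_add_mul_conj_le w z, norm_nonneg w, norm_nonneg z]
    rw [norm_mul, mul_comm, norm_mul, norm_inv, norm_pow, ← div_eq_mul_inv]
    gcongr
  · filter_upwards [ae_restrict_mem measurableSet_ball] with z hz w hw
    have := hlow z hz w hw
    exact (hasDerivAt_mul_inv_one_sub_mul_sq (norm_pos_iff.1 (by linarith))).const_mul (h z)

theorem enorm_two_div_pi_mul_two_pi : ‖(2 / π : ℂ)‖ₑ * ENNReal.ofReal (2 * π) = 4 := by
  rw [← ofReal_norm, ← ENNReal.ofReal_mul (norm_nonneg _), norm_div, Complex.norm_real,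
    Real.norm_of_nonneg Real.pi_pos.le, Complex.norm_ofNat]
  field_simp
  norm_num

/-- The operator `Q` maps `𝒲(𝔻)` boundedly into `𝓑(𝔻)`, with `‖Qg‖_𝓑 ≤ 16 ‖g‖_𝒲`. -/
theorem Q_maps_W_into_besov (g : ℂ → ℂ)
    (hgc : ContinuousOn g (ball (0:ℂ) 1)) (hgW : wNorm g < ⊤)
    (Qg : ℂ → ℂ)
    (hQ : ∀ w : ℂ, Qg w = (2 / Real.pi : ℂ) *
      ∫ z in ball (0:ℂ) 1,
        (Real.log (1 / ‖z‖) : ℂ) * w * g z * ((1 - w * (starRingEnd ℂ) z) ^ 2)⁻¹) :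
    (∀ w ∈ ball (0:ℂ) 1, DifferentiableAt ℂ Qg w) ∧
    (⨆ w ∈ ball (0:ℂ) 1, (‖Qg w‖₊ : ℝ≥0∞)) + besovNorm0 Qg ≤ 16 * wNorm g := by
  have hQg : Qg = fun w => (2 / π : ℂ) * ∫ z in ball (0:ℂ) 1,
      (Real.log (1 / ‖z‖) : ℂ) * g z * (w * ((1 - w * conj z) ^ 2)⁻¹) := by
    ext w
    simp only [hQ, mul_assoc, mul_left_comm w]
  have hderiv : ∀ w ∈ ball (0:ℂ) 1, HasDerivAt Qg ((2 / π : ℂ) * ∫ z in ball (0:ℂ) 1,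
      (Real.log (1 / ‖z‖) : ℂ) * g z * ((1 + w * conj z) * ((1 - w * conj z) ^ 3)⁻¹)) w :=
    fun w hw => hQg ▸ (hasDerivAt_integral_ball_mul_kernel (integrableOn_log_mul hgc hgW)
      (mem_ball_zero_iff.1 hw)).const_mul _
  refine ⟨fun w hw => (hderiv w hw).differentiableAt, ?_⟩
  have hsup : ⨆ w ∈ ball (0:ℂ) 1, (‖Qg w‖₊ : ℝ≥0∞) ≤ 4 * wNorm g := by
    refine iSup₂_le fun w hw => ?_
    rw [← enorm_eq_nnnorm, hQg, enorm_mul, ← enorm_two_div_pi_mul_two_pi, mul_assoc]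
    exact mul_le_mul_right (enorm_integral_ball_kernel_le_wNorm g (mem_ball_zero_iff.1 hw)) _
  have hbesov : besovNorm0 Qg ≤ 4 * wNorm g := by
    rw [← enorm_two_div_pi_mul_two_pi, mul_assoc, wNorm_eq_lintegral_maxModulus]
    refine besovNorm0_le_of_enorm_deriv_le (aemeasurable_maxModulus hgc) enorm_ne_top
      fun w hw => ?_
    rw [(hderiv w hw).deriv, enorm_mul]
    exact mul_le_mul_right (enorm_integral_ball_kernel_deriv_le g (mem_ball_zero_iff.1 hw)) _
  calc _ ≤ 4 * wNorm g + 4 * wNorm g := add_le_add hsup hbesov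
    _ ≤ 16 * wNorm g := by rw [← add_mul]; gcongr; norm_num
end
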